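/- arXiv:2204.03079 — 5 statements merged into one kernel-verified Lean document; each statement's English description precedes it below -/
import Mathlib

section
/- Every non-discrete subsequential topological space (i.e., every non-discrete subspace of a sequential topological space) is groomed. -/
open Set Filter Topology TopologicalSpace

/-- A set `C` is an (infinite) sequence converging to `p`: it is infinite and
almost contained in every neighborhood of `p`. -/
def IsConvSeqTo {X : Type*} [TopologicalSpace X] (C : Set X) (p : X) : Prop :=
  C.Infinite ∧ ∀ U ∈ nhds p, (C \ U).Finite

/-- A space is non-discrete if some point is not isolated. -/
def NonDiscrete (X : Type*) [TopologicalSpace X] : Prop :=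
  ∃ x : X, ¬ IsOpen ({x} : Set X)

/-- An ideal of subsets: closed under subsets and finite unions, and containing
all finite sets. -/
def IsIdeal {α : Type*} (I : Set (Set α)) : Prop :=
  (∀ A B : Set α, A ⊆ B → B ∈ I → A ∈ I) ∧
  (∀ A ∈ I, ∀ B ∈ I, A ∪ B ∈ I) ∧
  (∀ A : Set α, A.Finite → A ∈ I)

/-- A family `I` is ω-hitting if for every countable family of infinite sets
there is a member of `I` meeting each of them in an infinite set. -/
def OmegaHitting {α : Type*} (I : Set (Set α)) : Prop :=
  ∀ Y : ℕ → Set α, (∀ n, (Y n).Infinite) → ∃ A ∈ I, ∀ n, (Y n ∩ A).Infinite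

/-- An ideal `I` on `α` is tame if for every `I`-positive set `Y`, every
`f : Y → ω` and every ω-hitting ideal `J` on `ω` there is `j ∈ J` whose
`f`-preimage (inside `Y`) is `I`-positive. -/
def Tame {α : Type*} (I : Set (Set α)) : Prop :=
  ∀ Y : Set α, Y ∉ I → ∀ f : α → ℕ, ∀ J : Set (Set ℕ),
    IsIdeal J → OmegaHitting J → ∃ j ∈ J, Y ∩ f ⁻¹' j ∉ I

/-- `Y` is entangled if for every point `x`, the ideal
`I_x ↾ Y = {A ⊆ Y : x ∉ closure A}` is ω-hitting (on `Y`). -/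
def Entangled {X : Type*} [TopologicalSpace X] (Y : Set X) : Prop :=
  ∀ x : X, ∀ Z : ℕ → Set X, (∀ n, Z n ⊆ Y ∧ (Z n).Infinite) →
    ∃ A : Set X, A ⊆ Y ∧ x ∉ closure A ∧ ∀ n, (Z n ∩ A).Infinite

/-- A space is groomed if it contains no dense entangled subset. -/
def Groomed (X : Type*) [TopologicalSpace X] : Prop :=
  ¬ ∃ D : Set X, Dense D ∧ Entangled D

/-- An ideal on a group is invariant if it is closed under left and right
translations and under inversion. -/
def InvariantIdeal {G : Type*} [Group G] (I : Set (Set G)) : Prop :=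
  ∀ A ∈ I, ∀ g : G,
    (fun h => g * h) '' A ∈ I ∧ (fun h => h * g) '' A ∈ I ∧ (fun h => h⁻¹) '' A ∈ I

/-- An ideal on a topological group is weakly closed if for every set `A` and
every sequence `C` converging to the identity,
`A ∈ I ↔ A ∪ {x : C·x ⊆* A} ∈ I`. -/
def WeaklyClosed {G : Type*} [Group G] [TopologicalSpace G] (I : Set (Set G)) : Prop :=
  ∀ A C : Set G, IsConvSeqTo C 1 →
    (A ∈ I ↔ A ∪ {x : G | ((fun c => c * x) '' C \ A).Finite} ∈ I)

/-- Alternative (1) of IIA: a countable subfamily of `I` capturing (meeting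
infinitely) every infinite convergent sequence. -/
def CapturesConvSeqs {G : Type*} [TopologicalSpace G] (I : Set (Set G)) : Prop :=
  ∃ S : Set (Set G), S.Countable ∧ S ⊆ I ∧
    ∀ C : Set G, ∀ p : G, IsConvSeqTo C p → ∃ A ∈ S, (C ∩ A).Infinite

/-- Alternative (2) of IIA: a countable family of `I`-positive sets which is an
almost π-network: every non-empty open set contains one of them modulo `I`. -/
def HasAlmostPiNetwork {G : Type*} [TopologicalSpace G] (I : Set (Set G)) : Prop :=
  ∃ H : Set (Set G), H.Countable ∧ (∀ A ∈ H, A ∉ I) ∧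
    ∀ U : Set G, IsOpen U → U.Nonempty → ∃ A ∈ H, A \ U ∈ I

/-- The Invariant Ideal Axiom: for every countable groomed topological group `G`
and every tame, weakly closed, invariant ideal on `G`, one of the two
alternatives holds. -/
def IIA : Prop :=
  ∀ (G : Type) [Group G] [TopologicalSpace G] [IsTopologicalGroup G] [T1Space G]
    [Countable G], Groomed G →
    ∀ I : Set (Set G), IsIdeal I → Tame I → WeaklyClosed I → InvariantIdeal I →
      CapturesConvSeqs I ∨ HasAlmostPiNetwork I

/-- A set is scattered if every nonempty subset has a point isolated in it. -/
def IsScattered {X : Type*} [TopologicalSpace X] (A : Set X) : Prop :=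
  ∀ B ⊆ A, B.Nonempty → ∃ x ∈ B, ∃ U : Set X, IsOpen U ∧ U ∩ B = {x}

/-- A set is closed discrete if it is closed and discrete as a subspace. -/
def IsClosedDiscrete {X : Type*} [TopologicalSpace X] (D : Set X) : Prop :=
  IsClosed D ∧ ∀ x ∈ D, ∃ U : Set X, IsOpen U ∧ U ∩ D = {x}

/-- The ideal of nowhere dense subsets of `X`. -/
def nwdIdeal (X : Type*) [TopologicalSpace X] : Set (Set X) :=
  {A | IsNowhereDense A}

/-- The ideal generated by the compact subsets of `X`. -/
def cptIdeal (X : Type*) [TopologicalSpace X] : Set (Set X) :=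
  {A | ∃ F : Set (Set X), F.Finite ∧ (∀ K ∈ F, IsCompact K) ∧ A ⊆ ⋃₀ F}

/-- The ideal generated by the closed scattered subsets of `X`. -/
def csctIdeal (X : Type*) [TopologicalSpace X] : Set (Set X) :=
  {A | ∃ F : Set (Set X), F.Finite ∧ (∀ K ∈ F, IsClosed K ∧ IsScattered K) ∧ A ⊆ ⋃₀ F}

/-- A set is countably compact: every countable open cover has a finite subcover. -/
def IsCountablyCompactSet {X : Type*} [TopologicalSpace X] (K : Set X) : Prop :=
  ∀ U : ℕ → Set X, (∀ n, IsOpen (U n)) → K ⊆ ⋃ n, U n →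
    ∃ t : Finset ℕ, K ⊆ ⋃ n ∈ t, U n

/-- A `kω`-space: the topology is determined by a countable family of compact sets. -/
def IsKOmega (X : Type*) [TopologicalSpace X] : Prop :=
  ∃ K : ℕ → Set X, (∀ n, IsCompact (K n)) ∧
    ∀ U : Set X, IsOpen U ↔ ∀ n, ∃ V : Set X, IsOpen V ∧ U ∩ K n = V ∩ K n

/-- A `cω`-space: the topology is determined by a countable family of countably
compact sets. -/
def IsCOmega (X : Type*) [TopologicalSpace X] : Prop :=
  ∃ K : ℕ → Set X, (∀ n, IsCountablyCompactSet (K n)) ∧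
    ∀ U : Set X, IsOpen U ↔ ∀ n, ∃ V : Set X, IsOpen V ∧ U ∩ K n = V ∩ K n

/-- A set is dense in itself if it has no points isolated in its subspace topology. -/
def DenseInItself {X : Type*} [TopologicalSpace X] (A : Set X) : Prop :=
  ∀ x ∈ A, x ∈ closure (A \ {x})

/-- A strict vD-network at `x`: a countable family of infinite closed discrete
sets, almost contained in every open neighborhood of `x` member-wise. -/
def StrictVDNetwork {X : Type*} [TopologicalSpace X] (D : Set (Set X)) (x : X) : Prop :=
  D.Countable ∧ (∀ E ∈ D, E.Infinite ∧ IsClosedDiscrete E) ∧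
    ∀ U : Set X, IsOpen U → x ∈ U → ∃ E ∈ D, (E \ U).Finite

/-- A relation `R ⊆ G × G` is large if for all `a b`, `(a,b) ∈ R` or `(a, a·b⁻¹) ∈ R`. -/
def IsLargeRel {G : Type*} [Group G] (R : Set (G × G)) : Prop :=
  ∀ a b : G, (a, b) ∈ R ∨ (a, a * b⁻¹) ∈ R

/-- `R⁻¹[B] = {a : (a,b) ∈ R for some b ∈ B}`. -/
def relPreimage {G : Type*} (R : Set (G × G)) (B : Set G) : Set G :=
  {a | ∃ b ∈ B, (a, b) ∈ R}

/-!
In a sequential T1 space, every `x ∈ closure A \ A` is caught by countably many infinite subsets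
of `A`: every subset of `A` meeting all of them infinitely accumulates at `x`. Indeed, the points
of `A` together with the caught points form a sequentially closed set, since a sequence converging
to `p ∉ A` either has infinitely many terms in `A`, whose values form an infinite set every
infinite subset of which accumulates at `p`, or has infinitely many caught terms, whose countably
many witnessing families can be merged. This passes to subspaces. If `D` is dense and `x` is not
isolated, then `x ∈ closure (D \ {x})`, and the countable family catching `x` is exactly what
entangledness of `D` forbids.
-/

/-- Equivalently: the ideal `I_x ↾ A` is not ω-hitting. -/
def NotOmegaHittingAt {Y : Type*} [TopologicalSpace Y] (A : Set Y) (x : Y) : Prop :=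
  ∃ S : Set (Set Y), S.Countable ∧ (∀ Z ∈ S, Z ⊆ A ∧ Z.Infinite) ∧
    ∀ B ⊆ A, (∀ Z ∈ S, (B ∩ Z).Infinite) → x ∈ closure B

section

variable {X Y : Type*} [TopologicalSpace X] [TopologicalSpace Y]

theorem Filter.Tendsto.mem_closure_of_infinite_subset_range {u : ℕ → Y} {p : Y}
    (hu : Tendsto u atTop (𝓝 p)) {T : Set Y} (hT : T ⊆ range u) (hinf : T.Infinite) :
    p ∈ closure T :=
  isClosed_closure.mem_of_frequently_of_tendsto
    ((Nat.frequently_atTop_iff_infinite.2 (hinf.preimage hT)).mono fun _ hn => subset_closure hn) hu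

theorem NotOmegaHittingAt.mono {A A' : Set Y} {x : Y} (h : NotOmegaHittingAt A x)
    (hAA' : A ⊆ A') : NotOmegaHittingAt A' x := by
  obtain ⟨S, hSc, hSA, hS⟩ := h
  refine ⟨S, hSc, fun Z hZ => ⟨(hSA Z hZ).1.trans hAA', (hSA Z hZ).2⟩, fun B _ hBZ => ?_⟩
  refine closure_mono inter_subset_left (hS (B ∩ A) inter_subset_right fun Z hZ => ?_)
  rw [inter_assoc, inter_eq_right.2 (hSA Z hZ).1]
  exact hBZ Z hZ

theorem NotOmegaHittingAt.of_frequently {ι : Type*} [Countable ι] {l : Filter ι} {A : Set Y}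
    {u : ι → Y} {p : Y} (hu : Tendsto u l (𝓝 p))
    (h : ∃ᶠ i in l, NotOmegaHittingAt A (u i)) : NotOmegaHittingAt A p := by
  choose! S hSc hSA hS using fun i (hi : NotOmegaHittingAt A (u i)) => hi
  set K := {i | NotOmegaHittingAt A (u i)}
  refine ⟨⋃ i ∈ K, S i, K.to_countable.biUnion hSc, fun Z hZ => ?_, fun B hB hBZ => ?_⟩
  · obtain ⟨i, hi, hZ⟩ := mem_iUnion₂.1 hZ
    exact hSA i hi Z hZ
  · refine isClosed_closure.mem_of_frequently_of_tendsto (h.mono fun i hi => ?_) hu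
    exact hS i hi B hB fun Z hZ => hBZ Z (mem_biUnion hi hZ)

theorem notOmegaHittingAt_of_tendsto [T1Space Y] {A : Set Y} {u : ℕ → Y} {p : Y}
    (hu : Tendsto u atTop (𝓝 p)) (hp : p ∉ A) (h : ∃ᶠ n in atTop, u n ∈ A) :
    NotOmegaHittingAt A p := by
  set Z := u '' {n | u n ∈ A}
  have hZA : Z ⊆ A := image_subset_iff.2 fun _ hn => hn
  have hZ : Z.Infinite := fun hfin =>
    hp <| hZA <| hfin.isClosed.mem_of_frequently_of_tendsto
      (h.mono fun _ hn => mem_image_of_mem u hn) hu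
  refine ⟨{Z}, countable_singleton Z, by simpa using ⟨hZA, hZ⟩, fun B _ hB => ?_⟩
  exact closure_mono inter_subset_left <| hu.mem_closure_of_infinite_subset_range
    (inter_subset_right.trans (image_subset_range _ _)) (hB Z rfl)

theorem notOmegaHittingAt_of_mem_closure [T1Space Y] [SequentialSpace Y] {A : Set Y} {x : Y}
    (hx : x ∈ closure A) (hxA : x ∉ A) : NotOmegaHittingAt A x := by
  have hclosed : IsSeqClosed {y | y ∈ A ∨ NotOmegaHittingAt A y} := by
    intro u p hu hp
    by_cases hpA : p ∈ A
    · exact Or.inl hpA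
    by_cases hout : ∃ᶠ n in atTop, u n ∉ A
    · exact Or.inr (.of_frequently hp (hout.mono fun n hn => (hu n).resolve_left hn))
    · exact Or.inr (notOmegaHittingAt_of_tendsto hp hpA
        ((not_frequently.1 hout).mono fun _ => not_not.1).frequently)
  exact (closure_minimal (fun _ hy => Or.inl hy) hclosed.isClosed hx).resolve_left hxA

theorem NotOmegaHittingAt.of_isEmbedding {f : X → Y} (hf : IsEmbedding f) {A : Set X} {x : X}
    (h : NotOmegaHittingAt (f '' A) (f x)) : NotOmegaHittingAt A x := by
  obtain ⟨S, hSc, hSA, hS⟩ := h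
  refine ⟨(f ⁻¹' ·) '' S, hSc.image _, ?_, fun B hB hBZ => ?_⟩
  · rintro _ ⟨Z, hZ, rfl⟩
    exact ⟨(preimage_mono (hSA Z hZ).1).trans (hf.injective.preimage_image A).subset,
      (hSA Z hZ).2.preimage ((hSA Z hZ).1.trans (image_subset_range _ _))⟩
  · rw [hf.isInducing.closure_eq_preimage_closure_image]
    refine hS (f '' B) (image_mono hB) fun Z hZ => ?_
    simpa only [image_inter_preimage] using
      (hBZ _ (mem_image_of_mem _ hZ)).image hf.injective.injOn

theorem Topology.IsEmbedding.notOmegaHittingAt_of_mem_closure [T1Space Y] [SequentialSpace Y]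
    {f : X → Y} (hf : IsEmbedding f) {A : Set X} {x : X} (hx : x ∈ closure A) (hxA : x ∉ A) :
    NotOmegaHittingAt A x := by
  rw [hf.isInducing.closure_eq_preimage_closure_image] at hx
  exact .of_isEmbedding hf <|
    _root_.notOmegaHittingAt_of_mem_closure hx (hf.injective.mem_set_image.not.2 hxA)

theorem NotOmegaHittingAt.not_entangled {D : Set X} {x : X} (h : NotOmegaHittingAt D x) :
    ¬ Entangled D := by
  intro hD
  obtain ⟨S, hSc, hSD, hS⟩ := h
  have hne : S.Nonempty := nonempty_iff_ne_empty.2 fun hS0 => by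
    simpa using hS ∅ (empty_subset D) (by simp [hS0])
  obtain ⟨Z, rfl⟩ := hSc.exists_eq_range hne
  obtain ⟨B, hBD, hxB, hZB⟩ := hD x Z fun n => hSD _ (mem_range_self n)
  exact hxB (hS B hBD (forall_mem_range.2 fun n => inter_comm B (Z n) ▸ hZB n))

end

/-- Every non-discrete subsequential space (i.e. non-discrete
subspace of a sequential space) is groomed. -/
theorem statement0 (Y : Type*) [TopologicalSpace Y] [T1Space Y] [SequentialSpace Y]
    (X : Set Y) (hX : NonDiscrete ↥X) : Groomed ↥X := by
  rintro ⟨D, hD, hDent⟩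
  obtain ⟨x, hx⟩ := hX
  have : (𝓝[≠] x).NeBot := ⟨mt (isOpen_singleton_iff_punctured_nhds x).2 hx⟩
  have hxD : x ∈ closure (D \ {x}) := (hD.sdiff_singleton x).closure_eq ▸ mem_univ x
  have := IsEmbedding.subtypeVal.notOmegaHittingAt_of_mem_closure hxD fun h => h.2 rfl
  exact (this.mono sdiff_subset).not_entangled hDent
end

section
/- Let X be a sequential topological space, S ⊆ X, and x ∈ closure(S). Let I be a family of subsets of X covering S. Then either there exists I ∈ I such that x ∈ closure(S ∩ I), or there is a countable family I* of countably infinite subfamilies of I such that whenever I' ⊆ I has infinite intersection with every member of I*, then x ∈ closure(S ∩ ⋃I'). -/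
open Set Filter Topology TopologicalSpace

/-!
The points at which the dichotomy holds contain `S` and form a sequentially closed set, so they
contain `closure S`. Let `u n → y` with the dichotomy at every `u n`. If infinitely many `u n` lie
in some `closure (S ∩ A n)` with `A n ∈ I`, then either only finitely many distinct `A n` occur
and one of them gives the first alternative at `y`, or the infinitely many distinct `A n` form one
countable family `J`, and every `I'` meeting `J` infinitely covers infinitely many of these `u n`.
Otherwise cofinitely many `u n` carry families `I*ₙ`, and their union serves for `y`.
-/

section SplittingCover

variable {X : Type*} [TopologicalSpace X]

def IsSplittingFamily (S : Set X) (I : Set (Set X)) (Istar : Set (Set (Set X))) (y : X) :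
    Prop :=
  Istar.Countable ∧ (∀ J ∈ Istar, J ⊆ I ∧ J.Countable ∧ J.Infinite) ∧
    ∀ I' ⊆ I, (∀ J ∈ Istar, (I' ∩ J).Infinite) → y ∈ closure (S ∩ ⋃₀ I')

def SplittingAlternative (S : Set X) (I : Set (Set X)) (y : X) : Prop :=
  (∃ A ∈ I, y ∈ closure (S ∩ A)) ∨ ∃ Istar, IsSplittingFamily S I Istar y

theorem mem_closure_of_tendsto_of_infinite {s : Set X} {u : ℕ → X} {y : X}
    (hu : Tendsto u atTop (𝓝 y)) {N : Set ℕ} (hN : N.Infinite)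
    (hs : ∀ n ∈ N, u n ∈ closure s) : y ∈ closure s :=
  closure_closure (s := s) ▸ mem_closure_of_frequently_of_tendsto
    ((Nat.frequently_atTop_iff_infinite.2 hN).mono hs) hu

variable {S : Set X} {I : Set (Set X)} {u : ℕ → X} {y : X} {N : Set ℕ}

theorem IsSplittingFamily.biUnion (hu : Tendsto u atTop (𝓝 y)) (hN : N.Infinite)
    {K : ℕ → Set (Set (Set X))} (hK : ∀ n ∈ N, IsSplittingFamily S I (K n) (u n)) :
    IsSplittingFamily S I (⋃ n ∈ N, K n) y := by
  refine ⟨N.to_countable.biUnion fun n hn => (hK n hn).1, fun J hJ => ?_,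
    fun I' hI' hmeets => ?_⟩
  · obtain ⟨n, hn, hJ⟩ := mem_iUnion₂.1 hJ
    exact (hK n hn).2.1 J hJ
  · exact mem_closure_of_tendsto_of_infinite hu hN fun n hn =>
      (hK n hn).2.2 I' hI' fun J hJ => hmeets J (mem_biUnion hn hJ)

theorem isSplittingFamily_singleton_image (hu : Tendsto u atTop (𝓝 y)) {A : ℕ → Set X}
    (hAI : ∀ n ∈ N, A n ∈ I) (hA : ∀ n ∈ N, u n ∈ closure (S ∩ A n))
    (himage : (A '' N).Infinite) : IsSplittingFamily S I {A '' N} y := by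
  refine ⟨countable_singleton _, ?_, fun I' _ hmeets => ?_⟩
  · rintro J rfl
    exact ⟨image_subset_iff.2 hAI, N.to_countable.image A, himage⟩
  · have hhits : {n | n ∈ N ∧ A n ∈ I'}.Infinite := by
      refine Infinite.of_image A ((hmeets _ rfl).mono ?_)
      rintro _ ⟨hI', n, hn, rfl⟩
      exact ⟨n, ⟨hn, hI'⟩, rfl⟩
    exact mem_closure_of_tendsto_of_infinite hu hhits fun n ⟨hn, hI'⟩ =>
      closure_mono (inter_subset_inter_right S (subset_sUnion_of_mem hI')) (hA n hn)

theorem exists_mem_closure_inter_of_finite_image (hu : Tendsto u atTop (𝓝 y))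
    (hN : N.Infinite) {A : ℕ → Set X} (hA : ∀ n ∈ N, u n ∈ closure (S ∩ A n))
    (himage : (A '' N).Finite) : ∃ n ∈ N, y ∈ closure (S ∩ A n) := by
  obtain ⟨_, ⟨m, hm, rfl⟩, hfiber⟩ : ∃ B ∈ A '' N, (N ∩ A ⁻¹' {B}).Infinite := by
    by_contra! h
    exact hN (Finite.of_finite_fibers A himage h)
  refine ⟨m, hm, mem_closure_of_tendsto_of_infinite hu hfiber fun n ⟨hn, hAn⟩ => ?_⟩
  rw [← mem_singleton_iff.1 hAn]
  exact hA n hn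

variable (S I) in
theorem isSeqClosed_setOf_splittingAlternative :
    IsSeqClosed {y | SplittingAlternative S I y} := by
  intro u y hu huy
  set N := {n | ∃ A ∈ I, u n ∈ closure (S ∩ A)}
  by_cases hN : N.Infinite
  · choose! A hAI hA using fun n (hn : n ∈ N) => hn
    by_cases himage : (A '' N).Infinite
    · exact Or.inr ⟨_, isSplittingFamily_singleton_image huy hAI hA himage⟩
    · obtain ⟨n, hn, hy⟩ :=
        exists_mem_closure_inter_of_finite_image huy hN hA (not_infinite.1 himage)
      exact Or.inl ⟨A n, hAI n hn, hy⟩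
  · choose! K hK using fun n (hn : n ∈ Nᶜ) => (hu n).resolve_left hn
    exact Or.inr ⟨_, IsSplittingFamily.biUnion huy (not_infinite.1 hN).infinite_compl hK⟩

end SplittingCover

theorem statement8_general (X : Type*) [TopologicalSpace X] [SequentialSpace X]
    (S : Set X) (x : X) (hx : x ∈ closure S)
    (I : Set (Set X)) (hcov : S ⊆ ⋃₀ I) :
    (∃ A ∈ I, x ∈ closure (S ∩ A)) ∨
      ∃ Istar : Set (Set (Set X)), Istar.Countable ∧
        (∀ J ∈ Istar, J ⊆ I ∧ J.Countable ∧ J.Infinite) ∧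
        ∀ I' ⊆ I, (∀ J ∈ Istar, (I' ∩ J).Infinite) →
          x ∈ closure (S ∩ ⋃₀ I') := by
  have hS : S ⊆ {y | SplittingAlternative S I y} := fun y hy =>
    let ⟨A, hA, hyA⟩ := hcov hy
    Or.inl ⟨A, hA, subset_closure ⟨hy, hyA⟩⟩
  exact (isSeqClosed_setOf_splittingAlternative S I).isClosed.closure_subset_iff.2 hS hx

/-- the splitting cover lemma for sequential spaces. -/
theorem statement8 (X : Type*) [TopologicalSpace X] [T1Space X] [SequentialSpace X]
    (S : Set X) (x : X) (hx : x ∈ closure S)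
    (I : Set (Set X)) (hcov : S ⊆ ⋃₀ I) :
    (∃ A ∈ I, x ∈ closure (S ∩ A)) ∨
      ∃ Istar : Set (Set (Set X)), Istar.Countable ∧
        (∀ J ∈ Istar, J ⊆ I ∧ J.Countable ∧ J.Infinite) ∧
        ∀ I' ⊆ I, (∀ J ∈ Istar, (I' ∩ J).Infinite) →
          x ∈ closure (S ∩ ⋃₀ I') :=
  statement8_general X S x hx I hcov
end

section
/- Let G be a countable non-discrete sequential T1 topological group. Then each of the ideals nwd(G) (nowhere dense subsets), cpt(G) (the ideal generated by compact subsets), and csct(G) (the ideal generated by closed scattered subsets) is tame. -/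
open Set Filter Topology TopologicalSpace

/-!
Let `F m` be the closure of the fibre `Y ∩ f ⁻¹' {m}` and `Φ = spreadLimits F` the set of limits
of sequences with `x n ∈ F (ν n)` and `ν n → ∞`. Such a limit lies in the closure of
`⋃ m ∈ j, F m` whenever `j` meets `range ν` in an infinite set; as the space is countable, one
member `j` of an ω-hitting ideal works for all points of `Φ` at once, and then
`closure Φ ⊆ closure (Y ∩ f ⁻¹' j)`.

In a sequential space `closure Φ ∪ ⋃ m, F m` is closed, so near a point outside `closure Φ` the
set `closure Y` is covered by finitely many `F m`. When every fibre lies in the ideal, this puts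
`interior (closure Y)`, resp. any subset of `closure Y` without isolated points, inside
`closure Φ`. For the compact ideal, a sequence in `closure Y` leaving every compact set either
returns infinitely often to `closure Φ`, or is eventually spread over infinitely many of the
compact sets `F m`; then `range ν` is one more infinite set to hand to the ω-hitting ideal.
-/

section

variable {X : Type*} [TopologicalSpace X]

theorem IsNowhereDense.union {A B : Set X} (hA : IsNowhereDense A) (hB : IsNowhereDense B) :
    IsNowhereDense (A ∪ B) := by
  rwa [IsNowhereDense, closure_union,
    interior_union_isClosed_of_interior_empty isClosed_closure hB]

theorem isNowhereDense_biUnion {ι : Type*} {s : Set ι} {K : ι → Set X} (hs : s.Finite)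
    (hK : ∀ i ∈ s, IsNowhereDense (K i)) : IsNowhereDense (⋃ i ∈ s, K i) := by
  induction s, hs using Set.Finite.induction_on with
  | empty => simp
  | @insert i s _ _ ih =>
    rw [biUnion_insert]
    exact (hK i (mem_insert i s)).union (ih fun k hk => hK k (mem_insert_of_mem i hk))

theorem IsNowhereDense.eq_empty_of_isOpen_of_subset {N U : Set X} (hN : IsNowhereDense N)
    (hU : IsOpen U) (hUN : U ⊆ N) : U = ∅ :=
  subset_empty_iff.1 (hN ▸ interior_maximal (hUN.trans subset_closure) hU)

theorem IsScattered.mono {A B : Set X} (hA : IsScattered A) (hBA : B ⊆ A) : IsScattered B :=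
  fun C hC => hA C (hC.trans hBA)

theorem isScattered_empty : IsScattered (∅ : Set X) := fun _ hC hne =>
  absurd (subset_empty_iff.1 hC ▸ hne) Set.not_nonempty_empty

theorem IsScattered.union {A B : Set X} (hAc : IsClosed A) (hA : IsScattered A)
    (hB : IsScattered B) : IsScattered (A ∪ B) := by
  intro C hC hne
  by_cases hCA : (C \ A).Nonempty
  · obtain ⟨x, hx, U, hU, hUx⟩ := hB (C \ A) (fun c hc => (hC hc.1).resolve_left hc.2) hCA
    refine ⟨x, hx.1, U ∩ Aᶜ, hU.inter hAc.isOpen_compl, ?_⟩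
    rw [← hUx]
    ext
    simp only [mem_inter_iff, mem_compl_iff, Set.mem_sdiff]
    tauto
  · exact hA C (sdiff_eq_empty.1 (not_nonempty_iff_eq_empty.1 hCA)) hne

theorem isScattered_biUnion {ι : Type*} {s : Set ι} {K : ι → Set X} (hs : s.Finite)
    (hKc : ∀ i ∈ s, IsClosed (K i)) (hK : ∀ i ∈ s, IsScattered (K i)) :
    IsScattered (⋃ i ∈ s, K i) := by
  induction s, hs using Set.Finite.induction_on with
  | empty => simpa using isScattered_empty
  | @insert i s _ _ ih =>
    rw [biUnion_insert]
    exact IsScattered.union (hKc i (mem_insert i s)) (hK i (mem_insert i s))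
      (ih (fun k hk => hKc k (mem_insert_of_mem i hk)) fun k hk => hK k (mem_insert_of_mem i hk))

theorem mem_cptIdeal_iff_isCompact_closure [T2Space X] {A : Set X} :
    A ∈ cptIdeal X ↔ IsCompact (closure A) := by
  constructor
  · rintro ⟨F, hF, hK, hA⟩
    have hc := hF.isCompact_sUnion hK
    exact hc.of_isClosed_subset isClosed_closure (closure_minimal hA hc.isClosed)
  · intro h
    exact ⟨{closure A}, finite_singleton _, by simpa using h, by simpa using subset_closure⟩

theorem mem_csctIdeal_iff {A : Set X} :
    A ∈ csctIdeal X ↔ ∃ K, IsClosed K ∧ IsScattered K ∧ A ⊆ K := by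
  constructor
  · rintro ⟨F, hF, hK, hA⟩
    rw [sUnion_eq_biUnion] at hA
    exact ⟨_, hF.isClosed_biUnion fun K hKF => (hK K hKF).1,
      isScattered_biUnion hF (fun K hKF => (hK K hKF).1) fun K hKF => (hK K hKF).2, hA⟩
  · rintro ⟨K, hKc, hK, hA⟩
    exact ⟨{K}, finite_singleton K, by simpa using ⟨hKc, hK⟩, by simpa using hA⟩

theorem exists_monotone_open_cover_of_not_isCompact [Countable X] {T : Set X}
    (hT : ¬ IsCompact T) :
    ∃ W : ℕ → Set X, (∀ n, IsOpen (W n)) ∧ Monotone W ∧ T ⊆ ⋃ n, W n ∧ ∀ n, ¬ T ⊆ W n := by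
  classical
  rw [isCompact_iff_finite_subcover] at hT
  push Not at hT
  obtain ⟨ι, U, hUo, hTU, hU⟩ := hT
  have hTne : T.Nonempty := nonempty_iff_ne_empty.2 fun h => hU ∅ (h ▸ empty_subset _)
  obtain ⟨e, rfl⟩ := T.to_countable.exists_eq_range hTne
  choose i hi using fun n => mem_iUnion.1 (hTU (mem_range_self n))
  refine ⟨accumulate (U ∘ i), fun n => isOpen_biUnion fun k _ => hUo (i k),
    monotone_accumulate, ?_, fun n hn => hU ((Finset.range (n + 1)).image i) fun x hx => ?_⟩
  · rw [iUnion_accumulate]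
    exact range_subset_iff.2 fun n => mem_iUnion.2 ⟨n, hi n⟩
  · obtain ⟨k, hk, hxk⟩ := mem_accumulate.1 (hn hx)
    exact mem_iUnion₂.2 ⟨i k, Finset.mem_image_of_mem i (Finset.mem_range_succ_iff.2 hk), hxk⟩

theorem exists_tendsto_cocompact_of_not_isCompact [Countable X] {T : Set X} (hTc : IsClosed T)
    (hT : ¬ IsCompact T) : ∃ g : ℕ → X, (∀ k, g k ∈ T) ∧ Tendsto g atTop (cocompact X) := by
  obtain ⟨W, hWo, hWm, hTW, hTnW⟩ := exists_monotone_open_cover_of_not_isCompact hT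
  choose g hgT hgW using fun n => not_subset.1 (hTnW n)
  refine ⟨g, hgT, hasBasis_cocompact.tendsto_right_iff.2 fun K hK => ?_⟩
  obtain ⟨m, hm⟩ := (hK.inter_right hTc).elim_directed_cover W hWo
    (inter_subset_right.trans hTW) hWm.directed_le
  filter_upwards [eventually_ge_atTop m] with k hk hgK
  exact hgW k (hWm hk (hm ⟨hgK, hgT k⟩))

end

section Sequences

variable {α : Type*} {F : ℕ → Set α} {x : ℕ → α}

theorem exists_tendsto_atTop_of_eventually_notMem (hx : ∀ᶠ n in atTop, x n ∈ ⋃ m, F m)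
    (hF : ∀ m, ∀ᶠ n in atTop, x n ∉ F m) :
    ∃ ν : ℕ → ℕ, Tendsto ν atTop atTop ∧ ∀ᶠ n in atTop, x n ∈ F (ν n) := by
  have : ∀ n, ∃ m, x n ∈ ⋃ k, F k → x n ∈ F m := fun n =>
    (em (x n ∈ ⋃ k, F k)).elim (fun h => (mem_iUnion.1 h).imp fun _ hm _ => hm)
      fun h => ⟨0, fun h' => absurd h' h⟩
  choose ν hν using this
  have hxν : ∀ᶠ n in atTop, x n ∈ F (ν n) := hx.mono hν
  refine ⟨ν, tendsto_atTop.2 fun M => ?_, hxν⟩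
  filter_upwards [(eventually_all_finite (finite_Iio M)).2 fun m _ => hF m, hxν] with n hn hnν
  by_contra! h
  exact hn (ν n) h hnν

theorem frequently_mem_biUnion_of_infinite_inter_range {ν : ℕ → ℕ} {j : Set ℕ}
    (hx : ∀ᶠ n in atTop, x n ∈ F (ν n)) (hj : (range ν ∩ j).Infinite) :
    ∃ᶠ n in atTop, x n ∈ ⋃ m ∈ j, F m := by
  have hνj : ∃ᶠ n in atTop, ν n ∈ j := by
    refine Nat.frequently_atTop_iff_infinite.2 fun hfin => hj ((hfin.image ν).subset ?_)
    rintro _ ⟨⟨n, rfl⟩, hn⟩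
    exact mem_image_of_mem ν hn
  exact (hνj.and_eventually hx).mono fun n hn => mem_biUnion hn.1 hn.2

theorem infinite_range_of_tendsto_atTop {ν : ℕ → ℕ} (hν : Tendsto ν atTop atTop) :
    (range ν).Infinite :=
  fun hfin => not_bddAbove_of_tendsto_atTop hν hfin.bddAbove

end Sequences

section SpreadLimits

variable {X : Type*} [TopologicalSpace X] {F : ℕ → Set X}

def spreadLimits (F : ℕ → Set X) : Set X :=
  {q | ∃ x : ℕ → X, ∃ ν : ℕ → ℕ, Tendsto x atTop (𝓝 q) ∧ Tendsto ν atTop atTop ∧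
    ∀ᶠ n in atTop, x n ∈ F (ν n)}

theorem mem_spreadLimits_of_infinite {p : X} (hp : {m | p ∈ F m}.Infinite) :
    p ∈ spreadLimits F :=
  ⟨fun _ => p, Nat.nth (p ∈ F ·), tendsto_const_nhds, (Nat.nth_strictMono hp).tendsto_atTop,
    Eventually.of_forall (Nat.nth_mem_of_infinite hp)⟩

theorem spreadLimits_mono {F' : ℕ → Set X} (h : ∀ m, F m ⊆ F' m) :
    spreadLimits F ⊆ spreadLimits F' := fun _ ⟨x, ν, hx, hν, hxν⟩ =>
  ⟨x, ν, hx, hν, hxν.mono fun _ hn => h _ hn⟩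

theorem exists_infinite_forall_mem_closure_of_mem_spreadLimits {q : X}
    (hq : q ∈ spreadLimits F) :
    ∃ Z : Set ℕ, Z.Infinite ∧ ∀ j : Set ℕ, (Z ∩ j).Infinite → q ∈ closure (⋃ m ∈ j, F m) := by
  obtain ⟨x, ν, hxq, hν, hxν⟩ := hq
  exact ⟨range ν, infinite_range_of_tendsto_atTop hν, fun j hj =>
    mem_closure_of_frequently_of_tendsto (frequently_mem_biUnion_of_infinite_inter_range hxν hj)
      hxq⟩

variable [SequentialSpace X]

theorem isClosed_union_iUnion_of_spreadLimits_subset {E : Set X} (hF : ∀ m, IsClosed (F m))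
    (hE : IsClosed E) (hFE : spreadLimits F ⊆ E) : IsClosed (E ∪ ⋃ m, F m) := by
  refine IsSeqClosed.isClosed fun x q hx hxq => ?_
  by_cases hxE : ∃ᶠ n in atTop, x n ∈ E
  · exact Or.inl (hE.mem_of_frequently_of_tendsto hxE hxq)
  by_cases hxF : ∃ m, ∃ᶠ n in atTop, x n ∈ F m
  · obtain ⟨m, hm⟩ := hxF
    exact Or.inr (mem_iUnion.2 ⟨m, (hF m).mem_of_frequently_of_tendsto hm hxq⟩)
  simp only [not_frequently, not_exists] at hxE hxF
  obtain ⟨ν, hν, hxν⟩ := exists_tendsto_atTop_of_eventually_notMem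
    (hxE.mono fun n hn => (hx n).resolve_left hn) hxF
  exact Or.inl (hFE ⟨x, ν, hxq, hν, hxν⟩)

theorem closure_iUnion_subset_closure_spreadLimits_union (hF : ∀ m, IsClosed (F m)) :
    closure (⋃ m, F m) ⊆ closure (spreadLimits F) ∪ ⋃ m, F m :=
  closure_minimal subset_union_right
    (isClosed_union_iUnion_of_spreadLimits_subset hF isClosed_closure subset_closure)

theorem exists_isOpen_inter_closure_iUnion_subset_finite_biUnion (hF : ∀ m, IsClosed (F m))
    {p : X} (hp : p ∉ closure (spreadLimits F)) :
    ∃ U, IsOpen U ∧ p ∈ U ∧ ∃ s : Set ℕ, s.Finite ∧ U ∩ closure (⋃ m, F m) ⊆ ⋃ m ∈ s, F m := by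
  classical
  have hs : {m | p ∈ F m}.Finite :=
    not_infinite.1 fun h => hp (subset_closure (mem_spreadLimits_of_infinite h))
  -- `closure Φ` together with the `F m` not containing `p` is a closed set missing `p`
  let F' : ℕ → Set X := fun m => if p ∈ F m then ∅ else F m
  have hF'F : ∀ m, F' m ⊆ F m := fun m => by dsimp only [F']; split_ifs <;> simp
  have hF'c : ∀ m, IsClosed (F' m) := fun m => by
    dsimp only [F']; split_ifs
    exacts [isClosed_empty, hF m]
  refine ⟨(closure (spreadLimits F) ∪ ⋃ m, F' m)ᶜ,
    (isClosed_union_iUnion_of_spreadLimits_subset hF'c isClosed_closure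
      ((spreadLimits_mono hF'F).trans subset_closure)).isOpen_compl, ?_, _, hs, ?_⟩
  · rintro (h | h)
    · exact hp h
    · obtain ⟨m, hm⟩ := mem_iUnion.1 h
      dsimp only [F'] at hm
      split_ifs at hm with h'
      exacts [hm, h' hm]
  · rintro y ⟨hyU, hy⟩
    rcases closure_iUnion_subset_closure_spreadLimits_union hF hy with h | h
    · exact absurd (Or.inl h) hyU
    obtain ⟨m, hm⟩ := mem_iUnion.1 h
    refine mem_biUnion (by_contra fun hpm => hyU (Or.inr (mem_iUnion.2 ⟨m, ?_⟩))) hm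
    simpa [F', show p ∉ F m from hpm] using hm

theorem subset_closure_spreadLimits (hF : ∀ m, IsClosed (F m)) {P : Set X}
    (hP : P ⊆ closure (⋃ m, F m))
    (h : ∀ U, IsOpen U → (U ∩ P).Nonempty → ∀ s : Set ℕ, s.Finite → ¬ U ∩ P ⊆ ⋃ m ∈ s, F m) :
    P ⊆ closure (spreadLimits F) := by
  intro p hpP
  by_contra hp
  obtain ⟨U, hU, hpU, s, hs, hUs⟩ :=
    exists_isOpen_inter_closure_iUnion_subset_finite_biUnion hF hp
  exact h U hU ⟨p, hpU, hpP⟩ s hs fun y hy => hUs ⟨hy.1, hP hy.2⟩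

end SpreadLimits

theorem OmegaHitting.exists_forall_infinite_inter {α : Type*} {J : Set (Set α)}
    (hJ : OmegaHitting J) {S : Set (Set α)} (hSc : S.Countable) (hSne : S.Nonempty)
    (hS : ∀ Z ∈ S, Z.Infinite) : ∃ A ∈ J, ∀ Z ∈ S, (Z ∩ A).Infinite := by
  obtain ⟨e, rfl⟩ := hSc.exists_eq_range hSne
  obtain ⟨A, hA, he⟩ := hJ e fun n => hS _ (mem_range_self n)
  exact ⟨A, hA, forall_mem_range.2 he⟩

theorem OmegaHitting.exists_closure_spreadLimits_subset {X : Type*} [TopologicalSpace X]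
    [Countable X] {J : Set (Set ℕ)} (hJ : OmegaHitting J) (F : ℕ → Set X) {Z₀ : Set ℕ}
    (hZ₀ : Z₀.Infinite) :
    ∃ j ∈ J, (Z₀ ∩ j).Infinite ∧ closure (spreadLimits F) ⊆ closure (⋃ m ∈ j, F m) := by
  choose ζ hζ hζj using fun q : spreadLimits F =>
    exists_infinite_forall_mem_closure_of_mem_spreadLimits q.2
  obtain ⟨j, hj, hZj⟩ := hJ.exists_forall_infinite_inter ((countable_range ζ).insert Z₀)
    (insert_nonempty _ _) (forall_mem_insert.2 ⟨hZ₀, forall_mem_range.2 hζ⟩)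
  refine ⟨j, hj, hZj Z₀ (mem_insert _ _), closure_minimal (fun q hq => ?_) isClosed_closure⟩
  exact hζj ⟨q, hq⟩ j (hZj _ (mem_insert_of_mem _ (mem_range_self _)))

section Fibres

variable {X : Type*} [TopologicalSpace X] (Y : Set X) (f : X → ℕ)

theorem subset_iUnion_closure_fibre : Y ⊆ ⋃ m, closure (Y ∩ f ⁻¹' {m}) :=
  fun y hy => mem_iUnion.2 ⟨f y, subset_closure ⟨hy, rfl⟩⟩

theorem closure_biUnion_closure_fibre_subset (j : Set ℕ) :
    closure (⋃ m ∈ j, closure (Y ∩ f ⁻¹' {m})) ⊆ closure (Y ∩ f ⁻¹' j) :=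
  closure_minimal (iUnion₂_subset fun m hm => closure_mono fun y ⟨hy, hfy⟩ =>
    ⟨hy, show f y ∈ j from (show f y = m from hfy) ▸ hm⟩) isClosed_closure

end Fibres

theorem tame_of_forall_fibres_mem {α : Type*} {I : Set (Set α)}
    (h : ∀ Y, Y ∉ I → ∀ f : α → ℕ, (∀ m, Y ∩ f ⁻¹' {m} ∈ I) →
      ∀ J : Set (Set ℕ), OmegaHitting J → ∃ j ∈ J, Y ∩ f ⁻¹' j ∉ I) :
    Tame I := by
  intro Y hY f J hJ hJhit
  by_cases hfib : ∀ m, Y ∩ f ⁻¹' {m} ∈ I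
  · exact h Y hY f hfib J hJhit
  · obtain ⟨m, hm⟩ := not_forall.1 hfib
    exact ⟨{m}, hJ.2.2 _ (finite_singleton m), hm⟩

section Tame

variable {X : Type*} [TopologicalSpace X] [SequentialSpace X] [Countable X]

theorem tame_nwdIdeal : Tame (nwdIdeal X) := by
  refine tame_of_forall_fibres_mem fun Y hY f hfib J hJ => ?_
  set F := fun m => closure (Y ∩ f ⁻¹' {m})
  have hF : ∀ m, IsNowhereDense (F m) := fun m => IsNowhereDense.closure (hfib m)
  have hYΦ : interior (closure Y) ⊆ closure (spreadLimits F) := by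
    refine subset_closure_spreadLimits (fun _ => isClosed_closure)
      (interior_subset.trans (closure_mono (subset_iUnion_closure_fibre Y f)))
      fun U hU hne s hs hsub => hne.ne_empty ?_
    exact (isNowhereDense_biUnion hs fun m _ => hF m).eq_empty_of_isOpen_of_subset
      (hU.inter isOpen_interior) hsub
  obtain ⟨j, hj, -, hΦ⟩ := hJ.exists_closure_spreadLimits_subset F infinite_univ
  refine ⟨j, hj, fun hnwd => hY ?_⟩
  exact IsNowhereDense.closure hnwd |>.eq_empty_of_isOpen_of_subset isOpen_interior
    (hYΦ.trans (hΦ.trans (closure_biUnion_closure_fibre_subset Y f j)))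

theorem tame_cptIdeal [T2Space X] : Tame (cptIdeal X) := by
  refine tame_of_forall_fibres_mem fun Y hY f hfib J hJ => ?_
  set F := fun m => closure (Y ∩ f ⁻¹' {m})
  have hF : ∀ m, IsCompact (F m) := fun m => mem_cptIdeal_iff_isCompact_closure.1 (hfib m)
  obtain ⟨g, hgY, hg⟩ := exists_tendsto_cocompact_of_not_isCompact isClosed_closure
    (mt mem_cptIdeal_iff_isCompact_closure.2 hY)
  suffices ∃ j ∈ J, ∃ᶠ k in atTop, g k ∈ closure (Y ∩ f ⁻¹' j) by
    obtain ⟨j, hj, hgj⟩ := this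
    exact ⟨j, hj, fun hc =>
      hgj (hg.eventually (mem_cptIdeal_iff_isCompact_closure.1 hc).compl_mem_cocompact)⟩
  by_cases hgΦ : ∃ᶠ k in atTop, g k ∈ closure (spreadLimits F)
  · obtain ⟨j, hj, -, hΦ⟩ := hJ.exists_closure_spreadLimits_subset F infinite_univ
    exact ⟨j, hj, hgΦ.mono fun k hk => closure_biUnion_closure_fibre_subset Y f j (hΦ hk)⟩
  have hgF : ∀ᶠ k in atTop, g k ∈ ⋃ m, F m := (not_frequently.1 hgΦ).mono fun k hk =>
    (closure_iUnion_subset_closure_spreadLimits_union (fun m => (hF m).isClosed)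
      (closure_mono (subset_iUnion_closure_fibre Y f) (hgY k))).resolve_left hk
  obtain ⟨ν, hν, hgν⟩ := exists_tendsto_atTop_of_eventually_notMem hgF
    fun m => hg.eventually (hF m).compl_mem_cocompact
  obtain ⟨j, hj, hνj, -⟩ :=
    hJ.exists_closure_spreadLimits_subset F (infinite_range_of_tendsto_atTop hν)
  exact ⟨j, hj, (frequently_mem_biUnion_of_infinite_inter_range hgν hνj).mono fun k hk =>
    closure_biUnion_closure_fibre_subset Y f j (subset_closure hk)⟩

theorem tame_csctIdeal : Tame (csctIdeal X) := by
  refine tame_of_forall_fibres_mem fun Y hY f hfib J hJ => ?_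
  set F := fun m => closure (Y ∩ f ⁻¹' {m})
  have hF : ∀ m, IsClosed (F m) ∧ IsScattered (F m) := fun m => by
    obtain ⟨K, hK, hKs, hsub⟩ := mem_csctIdeal_iff.1 (hfib m)
    exact ⟨isClosed_closure, IsScattered.mono hKs (closure_minimal hsub hK)⟩
  obtain ⟨P, hPY, hPne, hP⟩ :
      ∃ P ⊆ closure Y, P.Nonempty ∧ ∀ x ∈ P, ∀ U, IsOpen U → U ∩ P ≠ {x} := by
    have : ¬ IsScattered (closure Y) := fun h =>
      hY (mem_csctIdeal_iff.2 ⟨_, isClosed_closure, h, subset_closure⟩)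
    simpa [IsScattered] using this
  have hPΦ : P ⊆ closure (spreadLimits F) := by
    refine subset_closure_spreadLimits (fun m => (hF m).1)
      (hPY.trans (closure_mono (subset_iUnion_closure_fibre Y f)))
      fun U hU hne s hs hsub => ?_
    obtain ⟨x, hx, V, hV, hVx⟩ :=
      isScattered_biUnion hs (fun m _ => (hF m).1) (fun m _ => (hF m).2) _ hsub hne
    exact hP x hx.2 (V ∩ U) (hV.inter hU) (by rwa [inter_assoc])
  obtain ⟨j, hj, -, hΦ⟩ := hJ.exists_closure_spreadLimits_subset F infinite_univ
  refine ⟨j, hj, fun hc => ?_⟩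
  obtain ⟨K, hK, hKs, hsub⟩ := mem_csctIdeal_iff.1 hc
  obtain ⟨x, hx, U, hU, hUx⟩ := hKs P (hPΦ.trans <| hΦ.trans <|
    (closure_biUnion_closure_fibre_subset Y f j).trans (closure_minimal hsub hK)) hPne
  exact hP x hx U hU hUx

end Tame

theorem statement10_general (G : Type*) [Group G] [TopologicalSpace G] [IsTopologicalGroup G]
    [T1Space G] [Countable G] [SequentialSpace G] :
    Tame (nwdIdeal G) ∧ Tame (cptIdeal G) ∧ Tame (csctIdeal G) :=
  ⟨tame_nwdIdeal, tame_cptIdeal, tame_csctIdeal⟩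

/-- in a countable non-discrete sequential group the ideals
`nwd`, `cpt` and `csct` are tame. -/
theorem statement10 (G : Type*) [Group G] [TopologicalSpace G] [IsTopologicalGroup G]
    [T1Space G] [Countable G] [SequentialSpace G] (hnd : NonDiscrete G) :
    Tame (nwdIdeal G) ∧ Tame (cptIdeal G) ∧ Tame (csctIdeal G) :=
  statement10_general G
end

section
/- Assume the Invariant Ideal Axiom IIA. Then the product of at most countably many separable Fréchet T1 topological groups is Fréchet. -/
open Set Filter Topology TopologicalSpace

/-!
Every separable group has a countable dense subgroup, a topological group with a dense first
countable subgroup is first countable, and countable products of first countable spaces are first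
countable, hence Fréchet. So it suffices that under IIA every countable non-discrete Fréchet T1
group `G` is first countable. Apply IIA to the ideal of nowhere dense subsets of `G`. The key tool
is that Fréchet groups are strongly Fréchet: it makes the ideal tame and `G` groomed, and it builds
a nontrivial sequence converging to `1` that is almost disjoint from any given countably many
nowhere dense sets, which rules out alternative (1). Alternative (2) yields a countable local
π-base at `1`, and in a topological group this gives a countable neighbourhood base.
-/

open scoped Pointwise

section NowhereDense

variable {X : Type*} [TopologicalSpace X]

lemma IsNowhereDense.union_s13 {s t : Set X} (hs : IsNowhereDense s) (ht : IsNowhereDense t) :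
    IsNowhereDense (s ∪ t) := by
  obtain ⟨hso, hsd⟩ := isClosed_isNowhereDense_iff_compl.1 ⟨isClosed_closure, hs.closure⟩
  obtain ⟨hto, htd⟩ := isClosed_isNowhereDense_iff_compl.1 ⟨isClosed_closure, ht.closure⟩
  have key : IsNowhereDense (closure s ∪ closure t) := by
    refine (isClosed_isNowhereDense_iff_compl.2 ?_).2
    rw [compl_union]
    exact ⟨hso.inter hto, hsd.inter_of_isOpen_left htd hso⟩
  exact key.mono (union_subset_union subset_closure subset_closure)

lemma Set.Finite.isNowhereDense_biUnion {ι : Type*} {I : Set ι} (hI : I.Finite)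
    {f : ι → Set X} (hf : ∀ i ∈ I, IsNowhereDense (f i)) : IsNowhereDense (⋃ i ∈ I, f i) := by
  induction I, hI using Set.Finite.induction_on with
  | empty => simp
  | insert _ _ ih =>
    rw [biUnion_insert]
    exact (hf _ (mem_insert _ _)).union_s13 (ih fun i hi => hf i (mem_insert_of_mem _ hi))

lemma Set.Finite.isNowhereDense [T1Space X] (hX : ∀ x : X, ¬IsOpen ({x} : Set X)) {s : Set X}
    (hs : s.Finite) : IsNowhereDense s := by
  have hsingleton (x : X) : IsNowhereDense ({x} : Set X) := by
    rw [isClosed_singleton.isNowhereDense_iff]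
    rcases subset_singleton_iff_eq.1 (interior_subset (s := {x})) with h | h
    · exact h
    · exact absurd (h ▸ isOpen_interior) (hX x)
  simpa using hs.isNowhereDense_biUnion fun x _ => hsingleton x

lemma interior_closure_subset_closure_diff {s t : Set X} (ht : IsNowhereDense t) :
    interior (closure s) ⊆ closure (s \ t) := by
  have hcover : closure s ⊆ closure (s \ t) ∪ closure t := by
    rw [← closure_union]
    exact closure_mono fun x hx => by by_cases h : x ∈ t <;> simp [hx, h]
  have hrest : interior (closure s) \ closure (s \ t) ⊆ interior (closure t) :=
    (isOpen_interior.sdiff isClosed_closure).subset_interior_iff.2 fun x hx =>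
      (hcover (interior_subset hx.1)).resolve_left hx.2
  rw [ht, subset_empty_iff, sdiff_eq_empty] at hrest
  exact hrest

end NowhereDense

section ConvergentSequences

variable {X Y : Type*} [TopologicalSpace X] [TopologicalSpace Y]

lemma IsConvSeqTo.mem_closure_of_infinite_inter {C A : Set X} {p : X} (hC : IsConvSeqTo C p)
    (hA : (C ∩ A).Infinite) : p ∈ closure A := by
  refine mem_closure_iff_nhds.2 fun U hU => ?_
  obtain ⟨y, ⟨hyC, hyA⟩, hyU⟩ := (hA.sdiff (hC.2 U hU)).nonempty
  exact ⟨y, not_not.1 fun h => hyU ⟨hyC, h⟩, hyA⟩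

lemma IsConvSeqTo.image {C : Set X} {p : X} (hC : IsConvSeqTo C p) {f : X → Y}
    (hf : Continuous f) (hinj : Function.Injective f) : IsConvSeqTo (f '' C) (f p) := by
  refine ⟨hC.1.image hinj.injOn, fun U hU => ?_⟩
  refine ((hC.2 _ (hf.continuousAt hU)).image f).subset ?_
  rintro _ ⟨⟨x, hx, rfl⟩, hxU⟩
  exact ⟨x, ⟨hx, hxU⟩, rfl⟩

lemma isConvSeqTo_range [T1Space X] {u : ℕ → X} {p : X} (hu : Tendsto u atTop (𝓝 p))
    (hne : ∀ n, u n ≠ p) : IsConvSeqTo (range u) p := by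
  refine ⟨fun hfin => ?_, fun U hU => ?_⟩
  · have hp : (range u)ᶜ ∈ 𝓝 p := hfin.isClosed.isOpen_compl.mem_nhds fun ⟨n, hn⟩ => hne n hn
    obtain ⟨n, hn⟩ := (hu.eventually hp).exists
    exact hn (mem_range_self n)
  · have hfin : {n | u n ∉ U}.Finite :=
      eventually_cofinite.1 ((Nat.cofinite_eq_atTop ▸ hu).eventually hU)
    refine (hfin.image u).subset ?_
    rintro _ ⟨⟨n, rfl⟩, hn⟩
    exact ⟨n, hn, rfl⟩

lemma Dense.exists_seq_tendsto_ne [T1Space X] [FrechetUrysohnSpace X] {D : Set X} (hD : Dense D)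
    {x : X} (hx : ¬IsOpen ({x} : Set X)) :
    ∃ w : ℕ → X, (∀ n, w n ≠ x ∧ w n ∈ D) ∧ Tendsto w atTop (𝓝 x) := by
  have hD' : Dense ({x}ᶜ ∩ D) :=
    (dense_compl_singleton_iff_not_open.2 hx).inter_of_isOpen_left hD isOpen_compl_singleton
  exact mem_closure_iff_seq_limit.1 (hD'.closure_eq ▸ mem_univ x)

lemma groomed_of_not_isOpen_singleton [T1Space X] [FrechetUrysohnSpace X] {x : X}
    (hx : ¬IsOpen ({x} : Set X)) : Groomed X := by
  rintro ⟨D, hD, hent⟩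
  obtain ⟨w, hw, hw1⟩ := hD.exists_seq_tendsto_ne hx
  have hC := isConvSeqTo_range hw1 fun n => (hw n).1
  obtain ⟨A, -, hA1, hA⟩ := hent x (fun _ => range w)
    fun _ => ⟨range_subset_iff.2 fun n => (hw n).2, hC.1⟩
  exact hA1 (hC.mem_closure_of_infinite_inter (hA 0))

end ConvergentSequences

section StrongFrechet

lemma exists_seq_mem_of_tendsto_of_tendsto_atTop {X : Type*} [TopologicalSpace X]
    {A : ℕ → Set X} (hA : Antitone A) {v : ℕ → X} {n : ℕ → ℕ} {x : X}
    (hvA : ∀ j, v j ∈ A (n j)) (hn : Tendsto n atTop atTop) (hv : Tendsto v atTop (𝓝 x)) :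
    ∃ u : ℕ → X, (∀ m, u m ∈ A m) ∧ Tendsto u atTop (𝓝 x) := by
  obtain ⟨φ, hφ, hnφ⟩ := extraction_forall_of_eventually fun m => tendsto_atTop.1 hn m
  exact ⟨v ∘ φ, fun m => hA (hnφ m) (hvA (φ m)), hv.comp hφ.tendsto_atTop⟩

lemma compl_insert_range_mem_nhds {X : Type*} [TopologicalSpace X] [T2Space X] {f : ℕ → X}
    {a b : X} (hf : Tendsto f atTop (𝓝 a)) (hab : a ≠ b) (hfb : ∀ k, f k ≠ b) :
    (insert a (range f))ᶜ ∈ 𝓝 b := by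
  refine hf.isCompact_insert_range.isClosed.isOpen_compl.mem_nhds ?_
  rintro (h | ⟨k, hk⟩)
  exacts [hab h.symm, hfb k hk]

/-- Each row `c n` together with its limit `z n` is a compact set missing `x`, so a sequence of
entries converging to `x` leaves every finite union of rows. -/
lemma exists_tendsto_diagonal_seq {X : Type*} [TopologicalSpace X] [T2Space X]
    [FrechetUrysohnSpace X] {c : ℕ → ℕ → X} {z : ℕ → X} {x : X}
    (hc : ∀ n, Tendsto (c n) atTop (𝓝 (z n))) (hz : Tendsto z atTop (𝓝 x)) (hzx : ∀ n, z n ≠ x)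
    (hcx : ∀ n k, c n k ≠ x) :
    ∃ n k : ℕ → ℕ, Tendsto n atTop atTop ∧ Tendsto (fun j => c (n j) (k j)) atTop (𝓝 x) := by
  have hxC : x ∈ closure (⋃ n, range (c n)) :=
    isClosed_closure.mem_of_tendsto hz (Eventually.of_forall fun n =>
      closure_mono (subset_iUnion (fun n => range (c n)) n)
        (mem_closure_of_tendsto (hc n) (Eventually.of_forall mem_range_self)))
  obtain ⟨w, hwC, hw⟩ := mem_closure_iff_seq_limit.1 hxC
  choose n k hnk using fun j => mem_iUnion.1 (hwC j)
  refine ⟨n, k, tendsto_atTop.2 fun N => ?_, by simpa only [hnk] using hw⟩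
  have hfar : ⋂ m ∈ Iio N, (insert (z m) (range (c m)))ᶜ ∈ 𝓝 x :=
    (biInter_mem (finite_Iio N)).2 fun m _ => compl_insert_range_mem_nhds (hc m) (hzx m) (hcx m)
  refine (hw.eventually hfar).mono fun j hj => not_lt.1 fun hjN => ?_
  exact mem_iInter₂.1 hj (n j) hjN (mem_insert_of_mem _ ⟨k j, hnk j⟩)

variable {G : Type*} [Group G] [TopologicalSpace G] [IsTopologicalGroup G]

/-- Fréchet groups are strongly Fréchet. Take `z n → x` with `z n ≠ x` and `s n k ∈ A n` with
`s n k → x`; right translation by `x⁻¹ * z n` turns row `n` into a sequence converging to `z n`,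
the diagonal lemma picks entries from rows `n j → ∞` converging to `x`, and translating back
gives points of `A (n j)` converging to `x`. -/
theorem exists_seq_mem_tendsto_of_antitone [T1Space G] [FrechetUrysohnSpace G]
    {A : ℕ → Set G} (hA : Antitone A) {x : G} (hx : ∀ n, x ∈ closure (A n)) :
    ∃ u : ℕ → G, (∀ n, u n ∈ A n) ∧ Tendsto u atTop (𝓝 x) := by
  by_cases hiso : x ∉ closure {x}ᶜ
  · refine ⟨fun _ => x, fun n => not_not.1 fun h => hiso ?_, tendsto_const_nhds⟩
    exact closure_mono (fun y hy (hyx : y = x) => h (hyx ▸ hy)) (hx n)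
  obtain ⟨z, hzx, hz⟩ := mem_closure_iff_seq_limit.1 (not_not.1 hiso)
  have hxt (n : ℕ) : x ∈ closure (A n ∩ {x * (z n)⁻¹ * x}ᶜ) := by
    have hx_ne : x ≠ x * (z n)⁻¹ * x := fun h =>
      hzx n (by rwa [mul_assoc, left_eq_mul, inv_mul_eq_one] at h)
    exact inter_comm (A n) _ ▸ isOpen_compl_singleton.inter_closure ⟨hx_ne, hx n⟩
  choose s hsA hs using fun n => mem_closure_iff_seq_limit.1 (hxt n)
  obtain ⟨n, k, hn, hnk⟩ := exists_tendsto_diagonal_seq (c := fun n k => s n k * x⁻¹ * z n)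
    (fun n => by simpa using ((hs n).mul_const x⁻¹).mul_const (z n)) hz hzx
    (fun n k h => (hsA n k).2 (eq_mul_of_mul_inv_eq (eq_mul_inv_of_mul_eq h)))
  refine exists_seq_mem_of_tendsto_of_tendsto_atTop hA (fun j => (hsA (n j) (k j)).1) hn ?_
  simpa using (hnk.mul (hz.comp hn).inv).mul_const x

end StrongFrechet

section NowhereDenseIdeal

variable {G : Type*} [Group G] [TopologicalSpace G] [IsTopologicalGroup G]

lemma not_isOpen_singleton_of_not_isOpen_one (h : ¬IsOpen ({1} : Set G)) (x : G) :
    ¬IsOpen ({x} : Set G) := fun hx => h (by simpa using (Homeomorph.mulLeft x⁻¹).isOpen_image.2 hx)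

lemma isIdeal_nwdIdeal [T1Space G] (h : ¬IsOpen ({1} : Set G)) : IsIdeal (nwdIdeal G) :=
  ⟨fun _ _ hAB hB => IsNowhereDense.mono hAB hB, fun _ hA _ hB => IsNowhereDense.union_s13 hA hB,
    fun _ hA => hA.isNowhereDense (not_isOpen_singleton_of_not_isOpen_one h)⟩

lemma invariantIdeal_nwdIdeal : InvariantIdeal (nwdIdeal G) := fun A hA g => by
  refine ⟨?_, ?_, ?_⟩
  · exact (Homeomorph.mulLeft g).isInducing.isNowhereDense_image hA
  · exact (Homeomorph.mulRight g).isInducing.isNowhereDense_image hA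
  · exact (Homeomorph.inv G).isInducing.isNowhereDense_image hA

lemma weaklyClosed_nwdIdeal : WeaklyClosed (nwdIdeal G) := by
  refine fun A C hC => ⟨fun hA => ?_, fun h => IsNowhereDense.mono subset_union_left h⟩
  refine IsNowhereDense.mono (union_subset subset_closure fun x hx => ?_) hA.closure
  have hCx := hC.image (continuous_mul_const x) (mul_left_injective x)
  rw [one_mul] at hCx
  exact hCx.mem_closure_of_infinite_inter (sdiff_sdiff_right_self _ _ ▸ hCx.1.sdiff hx)

variable [T1Space G] [FrechetUrysohnSpace G]

lemma exists_seq_tendsto_lt_of_fibers_isNowhereDense {Y : Set G} {f : G → ℕ}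
    (hf : ∀ m, IsNowhereDense (Y ∩ f ⁻¹' {m})) {x : G} (hx : x ∈ interior (closure Y)) :
    ∃ u : ℕ → G, (∀ k, u k ∈ Y ∧ k < f (u k)) ∧ Tendsto u atTop (𝓝 x) := by
  have hlow (k : ℕ) : IsNowhereDense (Y ∩ f ⁻¹' Iic k) := by
    refine ((finite_Iic k).isNowhereDense_biUnion fun m _ => hf m).mono fun y hy => ?_
    exact mem_iUnion₂.2 ⟨f y, hy.2, hy.1, rfl⟩
  have hA : Antitone fun k => Y ∩ {y | k < f y} := fun k l hkl y hy => ⟨hy.1, hkl.trans_lt hy.2⟩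
  refine exists_seq_mem_tendsto_of_antitone hA fun k => ?_
  have hY : Y \ (Y ∩ f ⁻¹' Iic k) = Y ∩ {y | k < f y} := by ext y; simp
  exact hY ▸ interior_closure_subset_closure_diff (hlow k) hx

/-- If all fibres of `f` on `Y` are nowhere dense, every point `x` of `V = interior (closure Y)`
is the limit of points `u x k ∈ Y` with `f (u x k) → ∞`. An `ω`-hitting `j` meets each of the
countably many sets `f '' range (u x)` infinitely, so `V ⊆ closure (Y ∩ f ⁻¹' j)`. -/
lemma tame_nwdIdeal_s13 [Countable G] : Tame (nwdIdeal G) := by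
  intro Y hY f J hJ hJhit
  by_cases hfib : ∃ m, Y ∩ f ⁻¹' {m} ∉ nwdIdeal G
  · obtain ⟨m, hm⟩ := hfib
    exact ⟨{m}, hJ.2.2 _ (finite_singleton m), hm⟩
  push Not at hfib
  set V := interior (closure Y)
  have hV : V.Nonempty := nonempty_iff_ne_empty.2 hY
  choose! u hu hux using fun x (hx : x ∈ V) =>
    exists_seq_tendsto_lt_of_fibers_isNowhereDense hfib hx
  obtain ⟨e, he⟩ := (to_countable V).exists_eq_range hV
  have heV (i : ℕ) : e i ∈ V := he ▸ mem_range_self i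
  have hZ (i : ℕ) : (range (f ∘ u (e i))).Infinite := infinite_of_not_bddAbove fun ⟨M, hM⟩ =>
    (hM (mem_range_self M)).not_gt (hu _ (heV i) M).2
  obtain ⟨j, hjJ, hj⟩ := hJhit _ hZ
  refine ⟨j, hjJ, fun hnwd => hV.ne_empty (subset_empty_iff.1 ?_)⟩
  refine hnwd ▸ isOpen_interior.subset_interior_iff.2 ?_
  intro x hx
  obtain ⟨i, rfl⟩ : x ∈ range e := he ▸ hx
  have hji : (f ∘ u (e i) '' (f ∘ u (e i) ⁻¹' j)).Infinite := image_preimage_eq_range_inter ▸ hj i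
  have hfreq : ∃ᶠ k in atTop, u (e i) k ∈ Y ∩ f ⁻¹' j :=
    Nat.frequently_atTop_iff_infinite.2 ((hji.of_image _).mono fun k hk => ⟨(hu _ (heV i) k).1, hk⟩)
  exact mem_closure_of_frequently_of_tendsto hfreq (hux _ (heV i))

lemma exists_isConvSeqTo_one_inter_finite (h : ¬IsOpen ({1} : Set G)) {E : ℕ → Set G}
    (hE : ∀ i, IsNowhereDense (E i)) :
    ∃ C : Set G, IsConvSeqTo C 1 ∧ ∀ i, (C ∩ E i).Finite := by
  set N : ℕ → Set G := fun k => closure ((⋃ i ∈ Iic k, E i) ∪ {1})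
  have hN (k : ℕ) : IsClosed (N k) ∧ IsNowhereDense (N k) :=
    ⟨isClosed_closure, IsNowhereDense.closure (((finite_Iic k).isNowhereDense_biUnion
      fun i _ => hE i).union_s13 ((finite_singleton 1).isNowhereDense
        (not_isOpen_singleton_of_not_isOpen_one h)))⟩
  have hA : Antitone fun k => (N k)ᶜ := fun k l hkl => compl_subset_compl.2 <|
    closure_mono <| union_subset_union_left _ <| biUnion_subset_biUnion_left (Iic_subset_Iic.2 hkl)
  obtain ⟨u, huN, hu⟩ := exists_seq_mem_tendsto_of_antitone hA fun k =>
    (isClosed_isNowhereDense_iff_compl.1 (hN k)).2.closure_eq ▸ mem_univ _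
  have hu1 (k : ℕ) : u k ≠ 1 := fun h1 => huN k (subset_closure (Or.inr h1))
  refine ⟨range u, isConvSeqTo_range hu hu1, fun i => ((finite_Iio i).image u).subset ?_⟩
  rintro _ ⟨⟨k, rfl⟩, hk⟩
  refine ⟨k, mem_Iio.2 <| not_le.1 fun hik => huN k (subset_closure (Or.inl ?_)), rfl⟩
  exact mem_biUnion (mem_Iic.2 hik) hk

lemma not_capturesConvSeqs_nwdIdeal (h : ¬IsOpen ({1} : Set G)) :
    ¬CapturesConvSeqs (nwdIdeal G) := by
  rintro ⟨S, hS, hSI, hcap⟩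
  obtain ⟨E, hE⟩ := (hS.insert ∅).exists_eq_range (insert_nonempty _ _)
  have hEI (i : ℕ) : IsNowhereDense (E i) := by
    rcases (hE ▸ mem_range_self i : E i ∈ insert ∅ S) with h0 | hi
    exacts [h0 ▸ isNowhereDense_empty, hSI hi]
  obtain ⟨C, hC, hCE⟩ := exists_isConvSeqTo_one_inter_finite h hEI
  obtain ⟨A, hAS, hCA⟩ := hcap C 1 hC
  obtain ⟨i, rfl⟩ : A ∈ range E := hE ▸ mem_insert_of_mem _ hAS
  exact hCA (hCE i)

end NowhereDenseIdeal

section FirstCountable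

lemma nhds_eq_lift'_closure_nhdsWithin_of_dense {X : Type*} [TopologicalSpace X] [RegularSpace X]
    {s : Set X} (hs : Dense s) (x : X) : 𝓝 x = (𝓝[s] x).lift' closure := by
  refine le_antisymm (le_lift'.2 fun t ht => ?_)
    (lift'_nhds_closure x ▸ lift'_mono nhdsWithin_le_nhds le_rfl)
  obtain ⟨u, hu, hut⟩ := mem_nhdsWithin_iff_exists_mem_nhds_inter.1 ht
  refine mem_of_superset (interior_mem_nhds.2 hu) ?_
  exact (hs.open_subset_closure_inter isOpen_interior).trans
    (closure_mono fun y hy => hut ⟨interior_subset hy.1, hy.2⟩)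

lemma isCountablyGenerated_nhds_of_dense {X : Type*} [TopologicalSpace X] [RegularSpace X]
    {s : Set X} (hs : Dense s) (x : X) [(𝓝[s] x).IsCountablyGenerated] :
    (𝓝 x).IsCountablyGenerated := by
  obtain ⟨b, hb⟩ := (𝓝[s] x).exists_antitone_basis
  exact nhds_eq_lift'_closure_nhdsWithin_of_dense hs x ▸
    (hb.toHasBasis.lift' (monotone_closure X)).isCountablyGenerated

variable {G : Type*} [Group G] [TopologicalSpace G] [IsTopologicalGroup G]

lemma firstCountableTopology_of_isCountablyGenerated_nhds_one
    [(𝓝 (1 : G)).IsCountablyGenerated] : FirstCountableTopology G :=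
  ⟨fun x => map_mul_left_nhds_one x ▸ inferInstance⟩

lemma Subgroup.firstCountableTopology_of_dense (H : Subgroup G) (hH : Dense (H : Set G))
    [FirstCountableTopology H] : FirstCountableTopology G := by
  have : (𝓝[(H : Set G)] 1).IsCountablyGenerated :=
    map_nhds_subtype_val (1 : H) ▸ inferInstance
  have := isCountablyGenerated_nhds_of_dense hH 1
  exact firstCountableTopology_of_isCountablyGenerated_nhds_one

/-- A countable local π-base at `1` gives a countable base: `O * O⁻¹` is an open neighbourhood
of `1`, and it lies in `U` as soon as `O ⊆ V` with `V / V ⊆ U`. -/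
lemma firstCountableTopology_of_countable_piBase_one {P : Set (Set G)} (hP : P.Countable)
    (hPo : ∀ O ∈ P, IsOpen O ∧ O.Nonempty) (hPU : ∀ U ∈ 𝓝 (1 : G), ∃ O ∈ P, O ⊆ U) :
    FirstCountableTopology G := by
  have hbasis : (𝓝 (1 : G)).HasBasis (· ∈ P) fun O => O * O⁻¹ := by
    refine ⟨fun U => ⟨fun hU => ?_, fun ⟨O, hO, hOU⟩ => mem_of_superset ?_ hOU⟩⟩
    · obtain ⟨V, hV, hVU⟩ := exists_nhds_split_inv hU
      obtain ⟨O, hO, hOV⟩ := hPU V hV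
      refine ⟨O, hO, ?_⟩
      rintro _ ⟨a, ha, b, hb, rfl⟩
      simpa [div_eq_mul_inv] using hVU a (hOV ha) b⁻¹ (hOV (mem_inv.1 hb))
    · obtain ⟨a, ha⟩ := (hPo O hO).2
      exact (hPo O hO).1.mul_right.mem_nhds ⟨a, ha, a⁻¹, inv_mem_inv.2 ha, mul_inv_cancel a⟩
  have := HasCountableBasis.isCountablyGenerated ⟨hbasis, hP⟩
  exact firstCountableTopology_of_isCountablyGenerated_nhds_one

lemma firstCountableTopology_of_hasAlmostPiNetwork (h : HasAlmostPiNetwork (nwdIdeal G)) :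
    FirstCountableTopology G := by
  obtain ⟨H, hHc, hHI, hHU⟩ := h
  refine firstCountableTopology_of_countable_piBase_one (hHc.image fun A => interior (closure A))
    ?_ fun U hU => ?_
  · rintro _ ⟨A, hA, rfl⟩
    exact ⟨isOpen_interior, nonempty_iff_ne_empty.2 (hHI A hA)⟩
  obtain ⟨W, hW, hWc, hWU⟩ := exists_mem_nhds_isClosed_subset hU
  obtain ⟨A, hA, hAW⟩ := hHU (interior W) isOpen_interior ⟨1, mem_interior_iff_mem_nhds.2 hW⟩
  refine ⟨_, mem_image_of_mem _ hA, fun x hx => hWU (hWc.closure_subset ?_)⟩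
  have hxA := interior_closure_subset_closure_diff hAW hx
  rw [sdiff_sdiff_right_self] at hxA
  exact closure_mono (inter_subset_right.trans interior_subset) hxA

end FirstCountable

section IIA

lemma firstCountableTopology_of_IIA_of_countable_type (hIIA : IIA) (G : Type) [Group G]
    [TopologicalSpace G] [IsTopologicalGroup G] [T1Space G] [Countable G] [FrechetUrysohnSpace G] :
    FirstCountableTopology G := by
  by_cases h : IsOpen ({1} : Set G)
  · have : DiscreteTopology G := discreteTopology_iff_isOpen_singleton.2 fun x => by
      simpa using (Homeomorph.mulLeft x).isOpen_image.2 h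
    infer_instance
  rcases hIIA G (groomed_of_not_isOpen_singleton h) (nwdIdeal G) (isIdeal_nwdIdeal h)
    tame_nwdIdeal_s13 weaklyClosed_nwdIdeal invariantIdeal_nwdIdeal with hcap | hnet
  · exact absurd hcap (not_capturesConvSeqs_nwdIdeal h)
  · exact firstCountableTopology_of_hasAlmostPiNetwork hnet

/-- `IIA` only speaks about groups in `Type`; a countable group in any universe is transported to
`Shrink.{0} G` with the induced topology. -/
lemma firstCountableTopology_of_IIA_of_countable (hIIA : IIA) (G : Type*) [Group G]
    [TopologicalSpace G] [IsTopologicalGroup G] [T1Space G] [Countable G] [FrechetUrysohnSpace G] :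
    FirstCountableTopology G := by
  let e : Shrink.{0} G ≃* G := Shrink.mulEquiv
  let _ : TopologicalSpace (Shrink.{0} G) := induced e inferInstance
  have he : IsInducing e := ⟨rfl⟩
  have := topologicalGroup_induced e
  have : T1Space (Shrink.{0} G) := IsEmbedding.t1Space ⟨he, e.injective⟩
  have : FrechetUrysohnSpace (Shrink.{0} G) := he.frechetUrysohnSpace
  have : Countable (Shrink.{0} G) := Countable.of_equiv G e.symm.toEquiv
  have := firstCountableTopology_of_IIA_of_countable_type hIIA (Shrink.{0} G)
  exact (e.toEquiv.toHomeomorphOfIsInducing he).symm.isInducing.firstCountableTopology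

lemma Subgroup.countable_closure {G : Type*} [Group G] {s : Set G} (hs : s.Countable) :
    (Subgroup.closure s : Set G).Countable := by
  have := hs.to_subtype
  rw [FreeGroup.closure_eq_range, MonoidHom.coe_range]
  exact countable_range _

lemma firstCountableTopology_of_IIA_of_separable (hIIA : IIA) (G : Type*) [Group G]
    [TopologicalSpace G] [IsTopologicalGroup G] [T1Space G] [SeparableSpace G]
    [FrechetUrysohnSpace G] : FirstCountableTopology G := by
  obtain ⟨s, hs, hsd⟩ := exists_countable_dense G
  have := (Subgroup.countable_closure hs).to_subtype
  have := firstCountableTopology_of_IIA_of_countable hIIA (Subgroup.closure s)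
  exact (Subgroup.closure s).firstCountableTopology_of_dense (hsd.mono Subgroup.subset_closure)

end IIA

/-- Under IIA, the product of at most countably many separable
Fréchet topological groups is Fréchet. -/
theorem statement13 (hIIA : IIA) (ι : Type*) [Countable ι] (G : ι → Type*)
    [∀ i, Group (G i)] [∀ i, TopologicalSpace (G i)] [∀ i, IsTopologicalGroup (G i)]
    [∀ i, T1Space (G i)] [∀ i, SeparableSpace (G i)]
    [∀ i, FrechetUrysohnSpace (G i)] :
    FrechetUrysohnSpace (∀ i, G i) := by
  have := fun i => firstCountableTopology_of_IIA_of_separable hIIA (G i)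
  infer_instance
end

section
/- A countable sequential T1 topological group is Fréchet if and only if it does not contain a closed subspace homeomorphic to the sequential fan S(ω). -/
open Set Filter Topology TopologicalSpace

/-- The underlying type of the sequential fan `S(ω)`: the spokes' points
`some (n, m)` together with the apex `none`. -/
def SeqFan : Type := Option (ℕ × ℕ)

/-- The fan topology: every point `some (n, m)` is isolated, and a set
containing the apex is open iff it contains all but finitely many points of
each spoke.  This is the quotient of a countable topological sum of convergent
sequences obtained by identifying their limit points. -/
instance : TopologicalSpace SeqFan where
  IsOpen U := none ∈ U → ∀ n : ℕ, {m : ℕ | some (n, m) ∉ U}.Finite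
  isOpen_univ := by
    intro _ n
    exact Set.finite_empty.subset (fun m hm => absurd (Set.mem_univ _) hm)
  isOpen_inter := by
    intro U V hU hV hUV n
    apply Set.Finite.subset ((hU hUV.1 n).union (hV hUV.2 n))
    intro m hm
    simp only [Set.mem_setOf_eq, Set.mem_inter_iff, Set.mem_union] at hm ⊢
    tauto
  isOpen_sUnion := by
    intro S hS hmem n
    obtain ⟨U, hUS, hnU⟩ := hmem
    apply Set.Finite.subset (hS U hUS hnU n)
    intro m hm
    simp only [Set.mem_setOf_eq] at hm ⊢
    intro hmU
    exact hm ⟨U, hUS, hmU⟩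

open Function

/-! In a topological group a copy of `S(ω)`, translated so that its apex is `1`, yields a
double sequence `d` with `d i m → 1` as `m → ∞` such that no sequence `d (i j) (m j)` with
`i j → ∞` converges to `1` (`IsFan`). A Fréchet group has no such `d`: with `t i := d 0 i`,
the points `t i * d i m` accumulate at every `t i`, hence at `1`; a sequence of them tending
to `1` can stay in each spoke only finitely often, and dividing by `t i` yields a forbidden
sequence.

Conversely, if a sequential group is not Fréchet, then after a translation some set `C`
has `1 ∉ seqClosure C` while points `b n → 1` lie in `seqClosure C \ C`. Sequences in `C`
converging to `b n`, translated by `(b n)⁻¹`, give the spokes: if `x j` in spoke `i j → ∞`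
converged to `1`, so would `b (i j) * x j ∈ C`. Countability allows choosing the spokes
pairwise disjoint and eventually outside a neighbourhood of each point other than `1`; a
sequence in the fan then converges only along a single spoke or to `1`, which makes the fan
closed and, the group being sequential, homeomorphic to `S(ω)`. -/

theorem Nat.eventually_atTop_iff_finite {p : ℕ → Prop} :
    (∀ᶠ n in atTop, p n) ↔ {n | ¬ p n}.Finite := by
  rw [← Nat.cofinite_eq_atTop, eventually_cofinite]

theorem Nat.tendsto_atTop_of_finite_preimage_singleton {f : ℕ → ℕ}
    (hf : ∀ i, (f ⁻¹' {i}).Finite) : Tendsto f atTop atTop := by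
  simpa only [Nat.cofinite_eq_atTop] using
    Tendsto.cofinite_of_finite_preimage_singleton fun i => (hf i).to_subtype

theorem Nat.finite_preimage_singleton_of_tendsto_atTop {f : ℕ → ℕ}
    (hf : Tendsto f atTop atTop) (i : ℕ) : (f ⁻¹' {i}).Finite :=
  (Nat.eventually_atTop_iff_finite.1 (tendsto_atTop.1 hf (i + 1))).subset
    fun j (hj : f j = i) => by simp [hj]

section ConvSeq

variable {X : Type*} [TopologicalSpace X] {D E : Set X} {p q : X}

theorem IsConvSeqTo.mono (h : IsConvSeqTo E p) (hDE : D ⊆ E) (hD : D.Infinite) :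
    IsConvSeqTo D p :=
  ⟨hD, fun U hU => (h.2 U hU).subset (sdiff_subset_sdiff_left hDE)⟩

theorem isConvSeqTo_of_tendsto {u : ℕ → X} (hu : Tendsto u atTop (𝓝 p)) (hD : D ⊆ range u)
    (hinf : D.Infinite) : IsConvSeqTo D p := by
  refine ⟨hinf, fun U hU => ((Nat.eventually_atTop_iff_finite.1 (hu hU)).image u).subset ?_⟩
  rintro _ ⟨hx, hxU⟩
  obtain ⟨n, rfl⟩ := hD hx
  exact ⟨n, hxU, rfl⟩

theorem IsConvSeqTo.tendsto_of_injective (h : IsConvSeqTo D p) {u : ℕ → X} (hu : Injective u)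
    (huD : range u ⊆ D) : Tendsto u atTop (𝓝 p) := fun U hU =>
  Nat.eventually_atTop_iff_finite.2 <| ((h.2 U hU).preimage hu.injOn).subset
    fun n hn => ⟨huD (mem_range_self n), hn⟩

theorem IsConvSeqTo.eq [T2Space X] (hp : IsConvSeqTo D p) (hq : IsConvSeqTo D q) : p = q := by
  by_contra hne
  obtain ⟨U, V, hU, hV, hUV⟩ := t2_separation_nhds hne
  refine hp.1 (((hp.2 U hU).union (hq.2 V hV)).subset fun x hx => ?_)
  by_cases hxU : x ∈ U
  · exact Or.inr ⟨hx, disjoint_left.1 hUV hxU⟩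
  · exact Or.inl ⟨hx, hxU⟩

end ConvSeq

section Fan

variable {X Y : Type*} [TopologicalSpace X] [TopologicalSpace Y]

structure IsFan (d : ℕ → ℕ → X) (p : X) : Prop where
  ne : ∀ i m, d i m ≠ p
  tendsto : ∀ i, Tendsto (d i) atTop (𝓝 p)
  not_tendsto : ∀ φ : ℕ → ℕ × ℕ, Tendsto (Prod.fst ∘ φ) atTop atTop →
    ¬ Tendsto (uncurry d ∘ φ) atTop (𝓝 p)

theorem IsFan.comp_isEmbedding {d : ℕ → ℕ → X} {p : X} (h : IsFan d p) {f : X → Y}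
    (hf : IsEmbedding f) : IsFan (fun i m => f (d i m)) (f p) where
  ne i m := hf.injective.ne (h.ne i m)
  tendsto i := (hf.continuous.tendsto p).comp (h.tendsto i)
  not_tendsto φ hφ hfφ := h.not_tendsto φ hφ (hf.isInducing.tendsto_nhds_iff.2 hfφ)

end Fan

namespace SeqFan

def apex : SeqFan := none

def pt (i m : ℕ) : SeqFan := some (i, m)

theorem eq_apex_or_eq_pt (z : SeqFan) : z = apex ∨ ∃ i m, z = pt i m := by
  rcases z with _ | ⟨i, m⟩
  exacts [.inl rfl, .inr ⟨i, m, rfl⟩]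

theorem pt_ne_apex (i m : ℕ) : pt i m ≠ apex := Option.some_ne_none _

theorem pt_injective : Injective (uncurry pt) := fun _ _ h => Option.some_injective _ h

theorem isOpen_iff {U : Set SeqFan} :
    IsOpen U ↔ (apex ∈ U → ∀ i, {m | pt i m ∉ U}.Finite) := Iff.rfl

theorem isClosed_iff {Z : Set SeqFan} :
    IsClosed Z ↔ apex ∈ Z ∨ ∀ i, {m | pt i m ∈ Z}.Finite := by
  simp [← isOpen_compl_iff, isOpen_iff, imp_iff_not_or]

theorem isFan : IsFan pt apex where
  ne := pt_ne_apex
  tendsto i := tendsto_nhds.2 fun U hU hapex =>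
    Nat.eventually_atTop_iff_finite.2 (isOpen_iff.1 hU hapex i)
  not_tendsto φ hφ hconv := by
    have hU : IsOpen (range (uncurry pt ∘ φ))ᶜ := isOpen_iff.2 fun _ i =>
      ((Nat.finite_preimage_singleton_of_tendsto_atTop hφ i).image (Prod.snd ∘ φ)).subset
        fun m hm => by
          obtain ⟨j, hj⟩ := not_notMem.1 hm
          have hφj : φ j = (i, m) := pt_injective hj
          exact ⟨j, by simp [hφj], by simp [hφj]⟩
    obtain ⟨j, hj⟩ := (hconv.eventually_mem (hU.mem_nhds fun ⟨j, hj⟩ => pt_ne_apex _ _ hj)).exists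
    exact hj (mem_range_self j)

end SeqFan

section FrechetGroup

variable {G : Type*} [Group G] [TopologicalSpace G] [IsTopologicalGroup G] [T2Space G]
  [FrechetUrysohnSpace G]

theorem not_isFan_one (d : ℕ → ℕ → G) : ¬ IsFan d 1 := by
  intro h
  set t := d 0
  choose U V hU hV hUV using fun i => t2_separation_nhds (h.ne 0 i).symm
  set A : Set G := {x | ∃ q : ℕ × ℕ, t q.1 * uncurry d q = x ∧ x ∈ V q.1}
  have htA : ∀ i, t i ∈ closure A := fun i => by
    have hi : Tendsto (fun m => t i * d i m) atTop (𝓝 (t i)) := by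
      simpa using (h.tendsto i).const_mul (t i)
    exact mem_closure_of_tendsto hi ((hi.eventually_mem (hV i)).mono fun m hm => ⟨(i, m), rfl, hm⟩)
  obtain ⟨a, haA, ha⟩ :=
    mem_closure_iff_seq_limit.1 (isClosed_closure.mem_of_tendsto (h.tendsto 0) (.of_forall htA))
  choose φ hφ hφV using haA
  have hφ1 : Tendsto (Prod.fst ∘ φ) atTop atTop :=
    Nat.tendsto_atTop_of_finite_preimage_singleton fun i =>
      (Nat.eventually_atTop_iff_finite.1 (ha.eventually_mem (hU i))).subset
        fun j (hj : (φ j).1 = i) hjU => disjoint_left.1 (hUV i) hjU (hj ▸ hφV j)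
  refine h.not_tendsto φ hφ1 ?_
  have hlim : Tendsto (fun j => (t (φ j).1)⁻¹ * a j) atTop (𝓝 1) := by
    simpa using ((h.tendsto 0).comp hφ1).inv.mul ha
  exact hlim.congr fun j => by rw [← hφ j, inv_mul_cancel_left]; rfl

theorem not_isFan (d : ℕ → ℕ → G) (p : G) : ¬ IsFan d p := fun h =>
  not_isFan_one _ (by simpa using h.comp_isEmbedding (Homeomorph.mulLeft p⁻¹).isEmbedding)

end FrechetGroup

section FanMap

variable {X : Type*} {d : ℕ → ℕ → X} {p : X}

def fanMap (p : X) (d : ℕ → ℕ → X) (z : SeqFan) : X := Option.elim z p (uncurry d)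

variable [TopologicalSpace X]

theorem IsFan.continuous_fanMap (h : IsFan d p) : Continuous (fanMap p d) :=
  continuous_def.2 fun _ hV hp i =>
    Nat.eventually_atTop_iff_finite.1 ((h.tendsto i).eventually_mem (hV.mem_nhds hp))

theorem IsFan.injective_fanMap (h : IsFan d p) (hd : Injective (uncurry d)) :
    Injective (fanMap p d) := by
  intro z z' hzz'
  rcases SeqFan.eq_apex_or_eq_pt z with rfl | ⟨i, m, rfl⟩ <;>
    rcases SeqFan.eq_apex_or_eq_pt z' with rfl | ⟨i', m', rfl⟩
  · rfl
  · exact absurd hzz'.symm (h.ne i' m')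
  · exact absurd hzz' (h.ne i m)
  · obtain ⟨rfl, rfl⟩ := Prod.mk.inj (hd hzz' : (i, m) = (i', m'))
    rfl

theorem IsFan.eq_and_infinite_inter_of_isConvSeqTo [T2Space X] (h : IsFan d p)
    (hloc : ∀ w ≠ p, ∃ U ∈ 𝓝 w, ∀ᶠ i in atTop, ∀ m, d i m ∉ U) {R : Set X} {w : X}
    (hR : R ⊆ ⋃ i, range (d i)) (hRw : IsConvSeqTo R w) :
    w = p ∧ ∃ i, (R ∩ range (d i)).Infinite := by
  by_cases hspoke : ∃ i, (R ∩ range (d i)).Infinite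
  · obtain ⟨i, hi⟩ := hspoke
    exact ⟨(hRw.mono inter_subset_left hi).eq
      (isConvSeqTo_of_tendsto (h.tendsto i) inter_subset_right hi), i, hi⟩
  simp only [not_exists, not_infinite] at hspoke
  exfalso
  by_cases hw : w = p
  · subst hw
    let r := hRw.1.natEmbedding
    have hr : Tendsto (fun j => (r j : X)) atTop (𝓝 w) :=
      hRw.tendsto_of_injective (Subtype.val_injective.comp r.injective)
        (range_subset_iff.2 fun j => (r j).2)
    choose φ hφ using fun j => mem_iUnion.1 (hR (r j).2)
    choose ψ hψ using hφ
    have hφ : Tendsto φ atTop atTop := Nat.tendsto_atTop_of_finite_preimage_singleton fun i =>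
      ((hspoke i).preimage (Subtype.val_injective.comp r.injective).injOn).subset
        fun j (hj : φ j = i) => ⟨(r j).2, ψ j, hj ▸ hψ j⟩
    exact h.not_tendsto (fun j => (φ j, ψ j)) hφ (hr.congr fun j => (hψ j).symm)
  · obtain ⟨U, hU, hev⟩ := hloc w hw
    obtain ⟨K, hK⟩ := eventually_atTop.1 hev
    refine hRw.1 (((hRw.2 U hU).union ((finite_lt_nat K).biUnion fun i _ => hspoke i)).subset ?_)
    intro x hx
    by_cases hxU : x ∈ U
    · obtain ⟨i, m, rfl⟩ := mem_iUnion.1 (hR hx)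
      exact Or.inr (mem_biUnion (not_le.1 fun hi => hK i hi m hxU) ⟨hx, m, rfl⟩)
    · exact Or.inl ⟨hx, hxU⟩

theorem IsFan.isClosedMap_fanMap [T2Space X] [SequentialSpace X] (h : IsFan d p)
    (hd : Injective (uncurry d)) (hloc : ∀ w ≠ p, ∃ U ∈ 𝓝 w, ∀ᶠ i in atTop, ∀ m, d i m ∉ U) :
    IsClosedMap (fanMap p d) := by
  intro Z hZ
  refine IsSeqClosed.isClosed fun u w hu huw => ?_
  rcases (range u).finite_or_infinite with hfin | hinf
  · obtain ⟨j, rfl⟩ := hfin.isClosed.mem_of_tendsto huw (.of_forall mem_range_self)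
    exact hu j
  have hR : range u \ {p} ⊆ ⋃ i, range (d i) := by
    rintro _ ⟨⟨j, rfl⟩, hjp⟩
    obtain ⟨z, -, hz⟩ := hu j
    rcases SeqFan.eq_apex_or_eq_pt z with rfl | ⟨i, m, rfl⟩
    · exact absurd hz.symm hjp
    · exact mem_iUnion.2 ⟨i, m, hz⟩
  obtain ⟨rfl, i, hi⟩ := h.eq_and_infinite_inter_of_isConvSeqTo hloc hR
    (isConvSeqTo_of_tendsto huw sdiff_subset (hinf.sdiff (finite_singleton p)))
  rcases SeqFan.isClosed_iff.1 hZ with hapex | hfin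
  · exact ⟨SeqFan.apex, hapex, rfl⟩
  refine absurd (((hfin i).image (d i)).subset ?_) hi
  rintro _ ⟨⟨⟨j, hj⟩, -⟩, m, rfl⟩
  obtain ⟨z, hz, hzj⟩ := hu j
  rcases SeqFan.eq_apex_or_eq_pt z with rfl | ⟨i', m', rfl⟩
  · exact absurd (hzj.trans hj) (h.ne i m).symm
  · obtain ⟨rfl, rfl⟩ := Prod.mk.inj (hd (hzj.trans hj) : (i', m') = (i, m))
    exact ⟨_, hz, rfl⟩

theorem IsFan.isClosedEmbedding_fanMap [T2Space X] [SequentialSpace X] (h : IsFan d p)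
    (hd : Injective (uncurry d)) (hloc : ∀ w ≠ p, ∃ U ∈ 𝓝 w, ∀ᶠ i in atTop, ∀ m, d i m ∉ U) :
    IsClosedEmbedding (fanMap p d) :=
  .of_continuous_injective_isClosedMap h.continuous_fanMap (h.injective_fanMap hd)
    (h.isClosedMap_fanMap hd hloc)

end FanMap

theorem seqClosure_preimage_subset {X Y : Type*} [TopologicalSpace X] [TopologicalSpace Y]
    {f : X → Y} (hf : Continuous f) (s : Set Y) : seqClosure (f ⁻¹' s) ⊆ f ⁻¹' seqClosure s :=
  fun _ ⟨u, hu, hlim⟩ => ⟨f ∘ u, hu, (hf.tendsto _).comp hlim⟩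

theorem eventually_notMem_of_notMem_seqClosure {X : Type*} [TopologicalSpace X] {s : Set X}
    {u : ℕ → X} {x : X} (hu : Tendsto u atTop (𝓝 x)) (hx : x ∉ seqClosure s) :
    ∀ᶠ n in atTop, u n ∉ s := by
  by_contra hfreq
  obtain ⟨φ, hφ, hφs⟩ :=
    extraction_of_frequently_atTop ((not_eventually.1 hfreq).mono fun _ => not_not.1)
  exact hx ⟨u ∘ φ, hφs, hu.comp hφ.tendsto_atTop⟩

theorem exists_injective_forall_mem {α : Type*} [Countable α] {A : ℕ → Set α}
    (hA : ∀ n, (A n).Infinite) : ∃ x : ℕ → α, Injective x ∧ ∀ n, x n ∈ A n := by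
  obtain ⟨g, hg⟩ := exists_injective_nat α
  have hgt : ∀ n k, ∃ a ∈ A n, k < g a := fun n k => by
    obtain ⟨_, ⟨a, ha, rfl⟩, hk⟩ := ((hA n).image hg.injOn).exists_gt k
    exact ⟨a, ha, hk⟩
  choose c hcA hcg using hgt
  let x : ℕ → α := fun n => Nat.rec (c 0 0) (fun n a => c (n + 1) (g a)) n
  have hx : StrictMono (g ∘ x) := strictMono_nat_of_lt_succ fun n => hcg _ _
  exact ⟨x, hx.injective.of_comp, fun n => by cases n <;> apply hcA⟩

theorem exists_nhds_seq_eventually_disjoint {X : Type*} [TopologicalSpace X] [T2Space X]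
    [Countable X] (p : X) :
    ∃ O : ℕ → Set X, (∀ i, O i ∈ 𝓝 p) ∧ ∀ w ≠ p, ∃ U ∈ 𝓝 w, ∀ᶠ i in atTop, Disjoint U (O i) := by
  have : Nonempty X := ⟨p⟩
  obtain ⟨z, hz⟩ := exists_surjective_nat X
  have hsep : ∀ k, ∃ V ∈ 𝓝 p, z k ≠ p → ∃ U ∈ 𝓝 (z k), Disjoint U V := fun k => by
    by_cases hk : z k = p
    · exact ⟨univ, univ_mem, fun h => absurd hk h⟩
    · obtain ⟨U, V, hU, hV, hUV⟩ := t2_separation_nhds hk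
      exact ⟨V, hV, fun _ => ⟨U, hU, hUV⟩⟩
  choose V hV hUV using hsep
  refine ⟨fun i => ⋂ k ∈ Iic i, V k, fun i => (biInter_mem (finite_Iic i)).2 fun k _ => hV k,
    fun w hw => ?_⟩
  obtain ⟨k, rfl⟩ := hz w
  obtain ⟨U, hU, hUV⟩ := hUV k hw
  exact ⟨U, hU, eventually_atTop.2 ⟨k, fun i hi => hUV.mono_right (biInter_subset_of_mem hi)⟩⟩

section SequentialGroup

variable {G : Type*} [Group G] [TopologicalSpace G] [IsTopologicalGroup G]

theorem exists_tendsto_one_mem_seqClosure_diff [SequentialSpace G]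
    (h : ¬ FrechetUrysohnSpace G) : ∃ C : Set G, (1 : G) ∉ seqClosure C ∧
      ∃ b : ℕ → G, Tendsto b atTop (𝓝 1) ∧ ∀ n, b n ∈ seqClosure C \ C := by
  obtain ⟨C₀, hC₀⟩ : ∃ C₀ : Set G, ¬ IsSeqClosed (seqClosure C₀) := by
    by_contra! hall
    exact h ⟨fun s => closure_minimal subset_seqClosure (hall s).isClosed⟩
  obtain ⟨u, q, hu, huq, hq⟩ : ∃ (u : ℕ → G) (q : G),
      (∀ n, u n ∈ seqClosure C₀) ∧ Tendsto u atTop (𝓝 q) ∧ q ∉ seqClosure C₀ := by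
    simpa [IsSeqClosed] using hC₀
  set C := (q * ·) ⁻¹' C₀
  have hC : (1 : G) ∉ seqClosure C := fun h1 =>
    hq (by simpa using seqClosure_preimage_subset (continuous_const_mul q) C₀ h1)
  have hv : Tendsto (fun n => q⁻¹ * u n) atTop (𝓝 1) := by simpa using huq.const_mul q⁻¹
  obtain ⟨N, hN⟩ := eventually_atTop.1 (eventually_notMem_of_notMem_seqClosure hv hC)
  refine ⟨C, hC, fun n => q⁻¹ * u (n + N), hv.comp (tendsto_add_atTop_nat N),
    fun n => ⟨seqClosure_preimage_subset (continuous_const_mul q⁻¹) C ?_, hN _ (by omega)⟩⟩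
  simpa [C, preimage_preimage] using hu (n + N)

theorem exists_isConvSeqTo_one_subset_preimage [T1Space G] {C : Set G} {b : G}
    (hb : b ∈ seqClosure C \ C) : ∃ E ⊆ (b * ·) ⁻¹' C, IsConvSeqTo E 1 := by
  obtain ⟨⟨s, hsC, hs⟩, hbC⟩ := hb
  have hinf : (range s).Infinite := fun hfin =>
    hbC (range_subset_iff.2 hsC (hfin.isClosed.mem_of_tendsto hs (.of_forall mem_range_self)))
  have hlim : Tendsto (fun n => b⁻¹ * s n) atTop (𝓝 1) := by simpa using hs.const_mul b⁻¹
  refine ⟨range fun n => b⁻¹ * s n, range_subset_iff.2 fun n => by simpa using hsC n,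
    isConvSeqTo_of_tendsto hlim subset_rfl ?_⟩
  exact range_comp (b⁻¹ * ·) s ▸ hinf.image (mul_right_injective b⁻¹).injOn

theorem exists_isClosed_homeomorph_seqFan [T1Space G] [Countable G] [SequentialSpace G]
    (h : ¬ FrechetUrysohnSpace G) : ∃ S : Set G, IsClosed S ∧ Nonempty (SeqFan ≃ₜ S) := by
  obtain ⟨C, hC, b, hb, hbC⟩ := exists_tendsto_one_mem_seqClosure_diff h
  choose E hEC hE using fun n => exists_isConvSeqTo_one_subset_preimage (hbC n)
  obtain ⟨O, hO, hOdisj⟩ := exists_nhds_seq_eventually_disjoint (1 : G)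
  have hEO : ∀ i, (E i ∩ O i).Infinite := fun i => by
    simpa only [sdiff_sdiff_right_self] using (hE i).1.sdiff ((hE i).2 _ (hO i))
  -- a single injective choice, indexed through `Nat.pair`, makes the spokes pairwise disjoint
  obtain ⟨x, hx, hxEO⟩ := exists_injective_forall_mem fun k => hEO (Nat.unpair k).1
  set d : ℕ → ℕ → G := fun i m => x (Nat.pair i m)
  have hdEO : ∀ i m, d i m ∈ E i ∩ O i := fun i m => by simpa [d] using hxEO (Nat.pair i m)
  have hd : Injective (uncurry d) := fun q q' hqq' =>
    Prod.ext_iff.2 (Nat.pair_eq_pair.1 (hx hqq'))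
  have hfan : IsFan d 1 :=
    { ne := fun i m h1 => (hbC i).2 (by simpa [h1] using hEC i (hdEO i m).1)
      tendsto := fun i => (hE i).tendsto_of_injective
        (hx.comp fun m m' hmm' => (Nat.pair_eq_pair.1 hmm').2)
        (range_subset_iff.2 fun m => (hdEO i m).1)
      not_tendsto := fun φ hφ hconv => hC ⟨fun j => b (φ j).1 * uncurry d (φ j),
        fun j => hEC _ (hdEO _ _).1, by simpa using (hb.comp hφ).mul hconv⟩ }
  have hloc : ∀ w ≠ (1 : G), ∃ U ∈ 𝓝 w, ∀ᶠ i in atTop, ∀ m, d i m ∉ U := fun w hw => by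
    obtain ⟨U, hU, hev⟩ := hOdisj w hw
    exact ⟨U, hU, hev.mono fun i hi m hm => disjoint_left.1 hi hm (hdEO i m).2⟩
  have he := hfan.isClosedEmbedding_fanMap hd hloc
  exact ⟨_, he.isClosed_range, ⟨he.toIsEmbedding.toHomeomorph⟩⟩

end SequentialGroup

/-- a countable sequential topological group is Fréchet iff it
contains no closed copy of the sequential fan `S(ω)`. -/
theorem statement18 (G : Type*) [Group G] [TopologicalSpace G] [IsTopologicalGroup G]
    [T1Space G] [Countable G] [SequentialSpace G] :
    FrechetUrysohnSpace G ↔ ¬ ∃ S : Set G, IsClosed S ∧ Nonempty (SeqFan ≃ₜ ↥S) := by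
  constructor
  · rintro _ ⟨S, -, ⟨e⟩⟩
    exact not_isFan _ _ (SeqFan.isFan.comp_isEmbedding (IsEmbedding.subtypeVal.comp e.isEmbedding))
  · intro h
    by_contra hF
    exact h (exists_isClosed_homeomorph_seqFan hF)
end
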